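/- arXiv:2010.15418 — 8 statements merged into one kernel-verified Lean document; each statement's English description precedes it below -/
import Mathlib

section
/- Let σ: E(K_{4n}) → {-1,1} and let M be a perfect matching of K_{4n} minimizing |σ(M)| among all perfect matchings, with σ(M) > 0. Then for every edge e of M with σ(e) = 1 and every edge f of M with σ(f) = −1, there do not exist two disjoint edges e', f' between e and f (i.e., each joining an endpoint of e to an endpoint of f) with σ(e') = σ(f') = −1. -/
open Finset

noncomputable def sumE {m : ℕ} (σ : Sym2 (Fin m) → ℤ) (S : Set (Sym2 (Fin m))) : ℤ :=
  ∑ e ∈ S.toFinite.toFinset, σ e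

def Kc (m : ℕ) : SimpleGraph (Fin m) := ⊤

/-!
Replacing `e = u₁u₂` and `f = v₁v₂` by `u₁v₁` and `u₂v₂` gives another perfect matching, and if
both new edges have sign `-1` its signed sum is `σ(M) - 2`. A perfect matching of `K_{4n}` has
`2n` edges of odd sign, so `σ(M)` is even; being positive it is at least `2`, hence
`|σ(M) - 2| < |σ(M)|`, contradicting minimality.
-/

theorem Finset.even_sum_of_odd {ι : Type*} {s : Finset ι} {f : ι → ℤ}
    (hf : ∀ i ∈ s, Odd (f i)) (hs : Even #s) : Even (∑ i ∈ s, f i) := by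
  have h : ∑ i ∈ s, f i = ∑ i ∈ s, (f i - 1) + #s := by simp
  rw [h]
  exact (Finset.even_sum _ fun i hi => (hf i hi).sub_odd odd_one).add (by exact_mod_cast hs)

namespace SimpleGraph.Subgraph

variable {V : Type*} {G : SimpleGraph V} {M : G.Subgraph}

theorem IsMatching.sym2_eq_of_adj_of_mem {a b x y : V} (hM : M.IsMatching) (hab : M.Adj a b)
    (hxy : M.Adj x y) (hx : x ∈ s(a, b)) : s(x, y) = s(a, b) := by
  rcases Sym2.mem_iff.1 hx with rfl | rfl
  · rw [hM.eq_of_adj_left hxy hab]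
  · rw [hM.eq_of_adj_left hxy hab.symm, Sym2.eq_swap]

theorem IsMatching.edgeSet_induce_compl {a b c d : V} (hM : M.IsMatching) (hab : M.Adj a b)
    (hcd : M.Adj c d) :
    (M.induce {x | x ∈ s(a, b) ∨ x ∈ s(c, d)}ᶜ).edgeSet = M.edgeSet \ {s(a, b), s(c, d)} := by
  ext ε
  induction ε using Sym2.ind with | _ x y => ?_
  simp only [Subgraph.mem_edgeSet, induce_adj, Set.mem_compl_iff, Set.mem_ofPred_eq,
    Set.mem_sdiff, Set.mem_insert_iff, Set.mem_singleton_iff]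
  constructor
  · rintro ⟨hx, -, hxy⟩
    refine ⟨hxy, ?_⟩
    rintro (h | h) <;> exact hx (by simp [← h])
  · rintro ⟨hxy, hne⟩
    refine ⟨fun hx => hne ?_, fun hy => hne ?_, hxy⟩
    · rcases hx with hx | hx
      · exact .inl (hM.sym2_eq_of_adj_of_mem hab hxy hx)
      · exact .inr (hM.sym2_eq_of_adj_of_mem hcd hxy hx)
    · rw [Sym2.eq_swap]
      rcases hy with hy | hy
      · exact .inl (hM.sym2_eq_of_adj_of_mem hab hxy.symm hy)
      · exact .inr (hM.sym2_eq_of_adj_of_mem hcd hxy.symm hy)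

theorem IsMatching.notMem_of_ne {a b x y : V} (hM : M.IsMatching) (hab : M.Adj a b)
    (hxy : M.Adj x y) (hne : s(x, y) ≠ s(a, b)) : x ∉ s(a, b) :=
  fun hx => hne (hM.sym2_eq_of_adj_of_mem hab hxy hx)

theorem IsPerfectMatching.two_mul_card_edgeFinset [Fintype V] [DecidableEq V]
    [DecidableRel M.spanningCoe.Adj] (hM : M.IsPerfectMatching) :
    2 * #M.spanningCoe.edgeFinset = Fintype.card V := by
  classical
  rw [← sum_degrees_eq_twice_card_edges]
  simp [(isPerfectMatching_iff_forall_degree).1 hM]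

theorem IsPerfectMatching.isMatching_induce {s : Set V} (hM : M.IsPerfectMatching)
    (hs : ∀ v w, M.Adj v w → v ∈ s → w ∈ s) : (M.induce s).IsMatching := by
  intro v hv
  obtain ⟨w, hvw, hw⟩ := hM.1 (hM.2 v)
  exact ⟨w, ⟨hv, hs v w hvw hv, hvw⟩, fun y hy => hw y hy.2.2⟩

theorem IsPerfectMatching.exists_swap {u₁ u₂ v₁ v₂ : V} (hM : M.IsPerfectMatching)
    (he : M.Adj u₁ u₂) (hf : M.Adj v₁ v₂) (hef : s(u₁, u₂) ≠ s(v₁, v₂))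
    (h₁ : G.Adj u₁ v₁) (h₂ : G.Adj u₂ v₂) :
    ∃ N : G.Subgraph, N.IsPerfectMatching ∧
      N.edgeSet = M.edgeSet \ {s(u₁, u₂), s(v₁, v₂)} ∪ {s(u₁, v₁), s(u₂, v₂)} := by
  set t : Set V := {x | x ∈ s(u₁, u₂) ∨ x ∈ s(v₁, v₂)}
  have hclosed : ∀ v w, M.Adj v w → v ∈ tᶜ → w ∈ tᶜ := by
    intro v w hvw hv hw
    refine hv ?_
    rcases hw with hw | hw
    · exact Or.inl (hM.1.sym2_eq_of_adj_of_mem he hvw.symm hw ▸ Sym2.mem_mk_right w v)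
    · exact Or.inr (hM.1.sym2_eq_of_adj_of_mem hf hvw.symm hw ▸ Sym2.mem_mk_right w v)
  have hu₁ := hM.1.notMem_of_ne hf he hef
  have hu₂ := hM.1.notMem_of_ne hf he.symm (by rwa [Sym2.eq_swap])
  simp only [Sym2.mem_iff, not_or] at hu₁ hu₂
  refine ⟨M.induce tᶜ ⊔ G.subgraphOfAdj h₁ ⊔ G.subgraphOfAdj h₂, ⟨?_, ?_⟩, ?_⟩
  · refine ((hM.isMatching_induce hclosed).sup (.subgraphOfAdj h₁) ?_).sup (.subgraphOfAdj h₂) ?_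
    · refine Set.disjoint_of_subset_left (support_subset_verts _) ?_
      simp [t]
    · refine Set.disjoint_of_subset_left (support_subset_verts _) ?_
      simp [t, (M.adj_sub he).ne.symm, (M.adj_sub hf).ne.symm, hu₂.1, Ne.symm hu₁.2]
  · intro v
    simp only [t, Sym2.mem_iff, verts_sup, induce_verts, subgraphOfAdj_verts, Set.union_insert,
      Set.union_singleton, Set.mem_insert_iff, Set.mem_compl_iff, Set.mem_ofPred_eq, not_or]
    tauto
  · rw [edgeSet_sup, edgeSet_sup, hM.1.edgeSet_induce_compl he hf, edgeSet_subgraphOfAdj,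
      edgeSet_subgraphOfAdj, Set.union_assoc, Set.singleton_union]

end SimpleGraph.Subgraph

section
variable {m : ℕ} (σ : Sym2 (Fin m) → ℤ)

theorem sumE_diff_union {S : Set (Sym2 (Fin m))} {a b c d : Sym2 (Fin m)} (ha : a ∈ S)
    (hb : b ∈ S) (hab : a ≠ b) (hc : c ∉ S) (hd : d ∉ S) (hcd : c ≠ d) :
    sumE σ (S \ {a, b} ∪ {c, d}) = sumE σ S - σ a - σ b + σ c + σ d := by
  classical
  simp only [sumE, Set.toFinite_toFinset, Set.toFinset_union, Set.toFinset_sdiff,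
    Set.toFinset_insert, Set.toFinset_singleton]
  have hsub : {a, b} ⊆ S.toFinset := by simp [Set.insert_subset_iff, ha, hb]
  have hdisj : Disjoint (S.toFinset \ {a, b}) {c, d} := by
    simp only [Finset.disjoint_left, Finset.mem_sdiff, Set.mem_toFinset, Finset.mem_insert,
      Finset.mem_singleton]
    rintro x ⟨hx, -⟩ (rfl | rfl)
    exacts [hc hx, hd hx]
  rw [Finset.sum_union hdisj, Finset.sum_sdiff_eq_sub hsub, Finset.sum_pair hab,
    Finset.sum_pair hcd]
  ring

theorem even_sumE_of_isPerfectMatching {M : (Kc m).Subgraph} (hM : M.IsPerfectMatching) (hm : 4 ∣ m)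
    (hσ : ∀ e ∈ M.edgeSet, Odd (σ e)) : Even (sumE σ M.edgeSet) := by
  classical
  have hcard : 2 * #M.spanningCoe.edgeFinset = m := by
    simpa using hM.two_mul_card_edgeFinset
  have hA : M.edgeSet.toFinite.toFinset = M.spanningCoe.edgeFinset := by
    ext e
    simp
  refine Finset.even_sum_of_odd (fun e he => hσ e (by simpa using he)) ?_
  rw [hA, Nat.even_iff]
  omega

theorem exists_isPerfectMatching_sumE_eq {M : (Kc m).Subgraph} (hM : M.IsPerfectMatching)
    {u₁ u₂ v₁ v₂ : Fin m} (he : M.Adj u₁ u₂) (hf : M.Adj v₁ v₂) (hef : s(u₁, u₂) ≠ s(v₁, v₂)) :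
    ∃ N : (Kc m).Subgraph, N.IsPerfectMatching ∧ sumE σ N.edgeSet =
      sumE σ M.edgeSet - σ s(u₁, u₂) - σ s(v₁, v₂) + σ s(u₁, v₁) + σ s(u₂, v₂) := by
  have hu₁ := hM.1.notMem_of_ne hf he hef
  have hu₂ := hM.1.notMem_of_ne hf he.symm (by rwa [Sym2.eq_swap])
  simp only [Sym2.mem_iff, not_or] at hu₁ hu₂
  obtain ⟨N, hN, hNe⟩ := hM.exists_swap he hf hef hu₁.1 hu₂.2
  refine ⟨N, hN, ?_⟩
  have hcross : s(u₁, v₁) ≠ s(u₂, v₂) := by simp [(M.adj_sub he).ne, hu₁.2]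
  rw [hNe, sumE_diff_union σ he hf hef (hM.1.not_adj_left_of_ne hu₂.1 he)
    (hM.1.not_adj_left_of_ne hu₁.2 he.symm) hcross]

end

theorem stmt4_general (n : ℕ) (σ : Sym2 (Fin (4*n)) → ℤ)
    (hσ : ∀ e ∈ (Kc (4*n)).edgeSet, σ e = 1 ∨ σ e = -1)
    (M : (Kc (4*n)).Subgraph) (hM : M.IsPerfectMatching)
    (hmin : ∀ N : (Kc (4*n)).Subgraph, N.IsPerfectMatching →
      |sumE σ M.edgeSet| ≤ |sumE σ N.edgeSet|)
    (hpos : 0 < sumE σ M.edgeSet)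
    (u1 u2 v1 v2 : Fin (4*n))
    (he : s(u1,u2) ∈ M.edgeSet) (hf : s(v1,v2) ∈ M.edgeSet)
    (he1 : σ s(u1,u2) = 1) (hf1 : σ s(v1,v2) = -1) :
    ¬ (σ s(u1,v1) = -1 ∧ σ s(u2,v2) = -1) := by
  rintro ⟨he', hf'⟩
  have hef : s(u1, u2) ≠ s(v1, v2) := fun h => by simp [h, hf1] at he1
  obtain ⟨N, hN, hsum⟩ := exists_isPerfectMatching_sumE_eq σ hM he hf hef
  have hodd : ∀ e ∈ M.edgeSet, Odd (σ e) := fun e he => by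
    rcases hσ e (M.edgeSet_subset he) with h | h <;> simp [h]
  obtain ⟨k, hk⟩ := even_sumE_of_isPerfectMatching σ hM (dvd_mul_right 4 n) hodd
  have hle := hmin N hN
  rw [hsum, he1, hf1, he', hf', abs_of_pos hpos, abs_of_nonneg (by omega)] at hle
  omega

theorem stmt4 (n : ℕ) (hn : 0 < n) (σ : Sym2 (Fin (4*n)) → ℤ)
    (hσ : ∀ e ∈ (Kc (4*n)).edgeSet, σ e = 1 ∨ σ e = -1)
    (M : (Kc (4*n)).Subgraph) (hM : M.IsPerfectMatching)
    (hmin : ∀ N : (Kc (4*n)).Subgraph, N.IsPerfectMatching →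
      |sumE σ M.edgeSet| ≤ |sumE σ N.edgeSet|)
    (hpos : 0 < sumE σ M.edgeSet)
    (u1 u2 v1 v2 : Fin (4*n))
    (he : s(u1,u2) ∈ M.edgeSet) (hf : s(v1,v2) ∈ M.edgeSet)
    (he1 : σ s(u1,u2) = 1) (hf1 : σ s(v1,v2) = -1) :
    ¬ (σ s(u1,v1) = -1 ∧ σ s(u2,v2) = -1) :=
  stmt4_general n σ hσ M hM hmin hpos u1 u2 v1 v2 he hf he1 hf1
end

section
/- Let σ: E(K_{4n}) → {-1,1} and let M be a perfect matching of K_{4n} minimizing |σ(M)|, with σ(M) > 0. Then for every two edges u1u2, v1v2 of M with σ(u1u2) = σ(v1v2) = 1, if σ(u1v1) = −1 then σ(u2v2) = −1. -/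
/-!
If `σ(u2v2) = 1`, relabelling `M` by the transposition of `u2` and `v1` gives a perfect matching
in which the positive edges `u1u2`, `v1v2` are replaced by `u1v1`, `u2v2`, so its signed sum is
`σ(M) - 2`. As `M` has `2n` edges of odd sign, `σ(M)` is even, hence at least `2`, and the new
matching has strictly smaller `|σ|`, contradicting minimality.
-/

open Finset

namespace SimpleGraph.Subgraph

variable {V : Type*} {G : SimpleGraph V} {M : G.Subgraph}

lemma IsMatching.eq_of_mem_of_mem (hM : M.IsMatching) {e e' : Sym2 V} {v : V}
    (he : e ∈ M.edgeSet) (he' : e' ∈ M.edgeSet) (hv : v ∈ e) (hv' : v ∈ e') : e = e' := by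
  rw [← Sym2.other_spec hv] at he ⊢
  rw [← Sym2.other_spec hv'] at he' ⊢
  rw [hM.eq_of_adj_left (M.mem_edgeSet.mp he) (M.mem_edgeSet.mp he')]

lemma IsPerfectMatching.map_iso {W : Type*} {G' : SimpleGraph W} (f : G ≃g G')
    (hM : M.IsPerfectMatching) : (M.map f.toHom).IsPerfectMatching :=
  ⟨(Iso.isMatching_map f).mpr hM.1, fun w => ⟨f.symm w, hM.2 _, f.apply_symm_apply w⟩⟩

lemma IsPerfectMatching.two_mul_ncard_edgeSet [Fintype V] (hM : M.IsPerfectMatching) :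
    2 * M.edgeSet.ncard = Fintype.card V := by
  classical
  have hdeg := M.spanningCoe.sum_degrees_eq_twice_card_edges
  simp only [degree_spanningCoe, (isPerfectMatching_iff_forall_degree).mp hM, sum_const,
    card_univ, smul_eq_mul, mul_one] at hdeg
  rw [hdeg, ← Set.ncard_coe_finset, coe_edgeFinset, edgeSet_spanningCoe]

end SimpleGraph.Subgraph

section sumE

variable {m : ℕ} (σ : Sym2 (Fin m) → ℤ)

lemma sumE_image {f : Sym2 (Fin m) → Sym2 (Fin m)} (hf : Function.Injective f)
    (S : Set (Sym2 (Fin m))) : sumE σ (f '' S) = sumE (σ ∘ f) S := by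
  classical
  rw [sumE, Set.Finite.toFinset_image _ S.toFinite, sum_image hf.injOn]
  rfl

lemma even_sumE {S : Set (Sym2 (Fin m))} (hσ : ∀ e ∈ S, Odd (σ e)) (hS : Even S.ncard) :
    Even (sumE σ S) := by
  have hsplit : sumE σ S = ∑ e ∈ S.toFinite.toFinset, (σ e - 1) + S.ncard := by
    rw [sum_sub_distrib, Set.ncard_eq_toFinset_card S S.toFinite, sumE]
    simp
  rw [hsplit]
  refine (even_sum _ fun e he => ?_).add (by exact_mod_cast hS)
  exact (hσ e ((Set.Finite.mem_toFinset _).mp he)).sub_odd odd_one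

lemma SimpleGraph.Subgraph.IsPerfectMatching.even_sumE {G : SimpleGraph (Fin m)} {M : G.Subgraph}
    (hM : M.IsPerfectMatching) (hm : 4 ∣ m) (hσ : ∀ e ∈ M.edgeSet, Odd (σ e)) :
    Even (sumE σ M.edgeSet) := by
  refine _root_.even_sumE σ hσ ⟨m / 4, ?_⟩
  have := hM.two_mul_ncard_edgeSet
  rw [Fintype.card_fin] at this
  omega

/-- The transposition of `b` and `c` sends `ab` to `ac` and `cd` to `bd`, and fixes every other
edge of the matching since no other edge contains `b` or `c`. -/
lemma sumE_image_swap {G : SimpleGraph (Fin m)} {M : G.Subgraph} (hM : M.IsMatching)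
    {a b c d : Fin m} (hab : s(a, b) ∈ M.edgeSet) (hcd : s(c, d) ∈ M.edgeSet)
    (hne : s(a, b) ≠ s(c, d)) :
    sumE σ (Sym2.map (Equiv.swap b c) '' M.edgeSet) =
      sumE σ M.edgeSet - σ s(a, b) - σ s(c, d) + σ s(a, c) + σ s(b, d) := by
  classical
  set τ := Equiv.swap b c
  have hb : ∀ e ∈ M.edgeSet, b ∈ e → e = s(a, b) := fun e he hbe =>
    hM.eq_of_mem_of_mem he hab hbe (Sym2.mem_mk_right a b)
  have hc : ∀ e ∈ M.edgeSet, c ∈ e → e = s(c, d) := fun e he hce =>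
    hM.eq_of_mem_of_mem he hcd hce (Sym2.mem_mk_left c d)
  have hac : a ≠ c := fun h => hne (hc _ hab (h ▸ Sym2.mem_mk_left a b))
  have hdb : d ≠ b := fun h => hne (hb _ hcd (h ▸ Sym2.mem_mk_right c d)).symm
  have hdc : d ≠ c := (M.mem_edgeSet.mp hcd).ne.symm
  have hab_ne : a ≠ b := (M.mem_edgeSet.mp hab).ne
  have hτab : Sym2.map τ s(a, b) = s(a, c) := by
    simp [τ, Equiv.swap_apply_of_ne_of_ne hab_ne hac]
  have hτcd : Sym2.map τ s(c, d) = s(b, d) := by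
    simp [τ, Equiv.swap_apply_of_ne_of_ne hdb hdc]
  have hsub : {s(a, b), s(c, d)} ⊆ M.edgeSet.toFinite.toFinset := by
    rw [insert_subset_iff, singleton_subset_iff, Set.Finite.mem_toFinset,
      Set.Finite.mem_toFinset]
    exact ⟨hab, hcd⟩
  have hfix : ∀ e ∈ M.edgeSet.toFinite.toFinset, e ∉ ({s(a, b), s(c, d)} : Finset _) →
      σ (Sym2.map τ e) - σ e = 0 := by
    intro e he hne'
    rw [Set.Finite.mem_toFinset] at he
    simp only [mem_insert, mem_singleton, not_or] at hne'
    rw [sub_eq_zero]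
    refine congrArg σ ((Sym2.map_congr fun x hx => ?_).trans (congrFun Sym2.map_id e))
    refine Equiv.swap_apply_of_ne_of_ne ?_ ?_
    · exact fun h => hne'.1 (hb e he (h ▸ hx))
    · exact fun h => hne'.2 (hc e he (h ▸ hx))
  have hdiff : ∑ e ∈ M.edgeSet.toFinite.toFinset, (σ (Sym2.map τ e) - σ e) =
      (σ s(a, c) - σ s(a, b)) + (σ s(b, d) - σ s(c, d)) := by
    rw [← sum_subset hsub hfix, sum_pair hne, hτab, hτcd]
  rw [sumE_image σ (Sym2.map.injective τ.injective)]
  rw [sum_sub_distrib] at hdiff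
  unfold sumE
  simp only [Function.comp_apply]
  linarith

end sumE

theorem stmt5_general (n : ℕ) (σ : Sym2 (Fin (4*n)) → ℤ)
    (hσ : ∀ e ∈ (Kc (4*n)).edgeSet, σ e = 1 ∨ σ e = -1)
    (M : (Kc (4*n)).Subgraph) (hM : M.IsPerfectMatching)
    (hmin : ∀ N : (Kc (4*n)).Subgraph, N.IsPerfectMatching →
      |sumE σ M.edgeSet| ≤ |sumE σ N.edgeSet|)
    (hpos : 0 < sumE σ M.edgeSet)
    (u1 u2 v1 v2 : Fin (4*n))
    (he : s(u1,u2) ∈ M.edgeSet) (hf : s(v1,v2) ∈ M.edgeSet)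
    (hef : s(u1,u2) ≠ s(v1,v2))
    (he1 : σ s(u1,u2) = 1) (hf1 : σ s(v1,v2) = 1)
    (hcross : σ s(u1,v1) = -1) :
    σ s(u2,v2) = -1 := by
  by_contra hne
  have hu2v2 : u2 ≠ v2 := fun h => hef <|
    hM.1.eq_of_mem_of_mem he hf (h ▸ Sym2.mem_mk_right u1 u2) (Sym2.mem_mk_right v1 v2)
  have hσ' : σ s(u2, v2) = 1 := (hσ _ (by simpa [Kc] using hu2v2)).resolve_right hne
  have hodd : ∀ e ∈ M.edgeSet, Odd (σ e) := fun e he => by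
    rcases hσ e (M.edgeSet_subset he) with h | h <;> rw [h]
    exacts [odd_one, odd_one.neg]
  obtain ⟨k, hk⟩ := hM.even_sumE σ (dvd_mul_right 4 n) hodd
  let τ : Kc (4*n) ≃g Kc (4*n) := SimpleGraph.Iso.completeGraph (Equiv.swap u2 v1)
  have hswap : sumE σ (M.map τ.toHom).edgeSet = sumE σ M.edgeSet - 2 := by
    rw [SimpleGraph.Subgraph.edgeSet_map, show ⇑τ.toHom = Equiv.swap u2 v1 from rfl,
      sumE_image_swap σ hM.1 he hf hef, he1, hf1, hcross, hσ']
    ring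
  have hle := hmin _ (hM.map_iso τ)
  have htwo : 2 ≤ sumE σ M.edgeSet := by omega
  rw [hswap, abs_of_pos hpos, abs_of_nonneg (sub_nonneg.mpr htwo)] at hle
  omega

theorem stmt5 (n : ℕ) (hn : 0 < n) (σ : Sym2 (Fin (4*n)) → ℤ)
    (hσ : ∀ e ∈ (Kc (4*n)).edgeSet, σ e = 1 ∨ σ e = -1)
    (M : (Kc (4*n)).Subgraph) (hM : M.IsPerfectMatching)
    (hmin : ∀ N : (Kc (4*n)).Subgraph, N.IsPerfectMatching →
      |sumE σ M.edgeSet| ≤ |sumE σ N.edgeSet|)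
    (hpos : 0 < sumE σ M.edgeSet)
    (u1 u2 v1 v2 : Fin (4*n))
    (he : s(u1,u2) ∈ M.edgeSet) (hf : s(v1,v2) ∈ M.edgeSet)
    (hef : s(u1,u2) ≠ s(v1,v2))
    (he1 : σ s(u1,u2) = 1) (hf1 : σ s(v1,v2) = 1)
    (hcross : σ s(u1,v1) = -1) :
    σ s(u2,v2) = -1 :=
  stmt5_general n σ hσ M hM hmin hpos u1 u2 v1 v2 he hf hef he1 hf1 hcross
end

section
/- For infinitely many positive integers n, there exists a function σ: E(K_{4n}) → {-1,1} with σ(E(K_{4n})) = 2 such that σ(M) ≠ 0 for every perfect matching M of K_{4n}. -/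
/-!
Give the edge `uv` of `K_V` the sign `ε u * ε v` for a vertex labelling `ε : V → {±1}`.
Twice the total edge sum is then `(∑ ε)² - |V|`, and along a perfect matching the product of the
edge signs is `∏ ε`. A zero-sum perfect matching of `K_{4n}` has exactly `n` negative edges, which
forces `∏ ε = (-1)ⁿ`. For `n = 4(N+1)² - 1` (odd) and `a = 2(n - N - 1)` (even) negative vertices we
get `∑ ε = 4n - 2a = 4(N+1)`, so the total edge sum is `2`, while `∏ ε = (-1)ᵃ = 1`.
-/

open Finset

section SignVectors

variable {ι : Type*} {s : Finset ι} {x : ι → ℤ}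

theorem prod_eq_neg_one_pow_card_filter_eq_neg_one (hx : ∀ i ∈ s, x i = 1 ∨ x i = -1) :
    ∏ i ∈ s, x i = (-1) ^ #{i ∈ s | x i = -1} := by
  rw [← prod_filter_mul_prod_filter_not s (fun i => x i = -1),
    prod_congr rfl fun i hi => (mem_filter.mp hi).2, prod_const,
    prod_eq_one fun i hi => (hx i (mem_filter.mp hi).1).resolve_right (mem_filter.mp hi).2,
    mul_one]

theorem sum_add_two_mul_card_filter_eq_neg_one (hx : ∀ i ∈ s, x i = 1 ∨ x i = -1) :
    ∑ i ∈ s, x i + 2 * #{i ∈ s | x i = -1} = #s := by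
  rw [← sum_filter_add_sum_filter_not s (fun i => x i = -1),
    sum_congr rfl fun i hi => (mem_filter.mp hi).2,
    sum_congr rfl fun i hi => (hx i (mem_filter.mp hi).1).resolve_right (mem_filter.mp hi).2,
    ← card_filter_add_card_filter_not (s := s) (fun i => x i = -1)]
  simp only [sum_const, smul_neg, nsmul_eq_mul, mul_one, Nat.cast_add]
  ring

theorem sum_sq_eq_card_of_eq_one_or_neg_one [Fintype ι] (hx : ∀ i, x i = 1 ∨ x i = -1) :
    ∑ i, x i ^ 2 = Fintype.card ι := by
  have hsq : ∀ i, x i ^ 2 = 1 := fun i => by rcases hx i with h | h <;> simp [h]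
  simp [hsq]

theorem exists_sign_vector_card_neg_eq [Fintype ι] {a : ℕ} (ha : a ≤ Fintype.card ι) :
    ∃ ε : ι → ℤ, (∀ i, ε i = 1 ∨ ε i = -1) ∧
      ∑ i, ε i + 2 * a = Fintype.card ι ∧ ∏ i, ε i = (-1) ^ a := by
  classical
  obtain ⟨S, -, hS⟩ := exists_subset_card_eq (s := (univ : Finset ι)) (by simpa using ha)
  set ε : ι → ℤ := fun i => if i ∈ S then -1 else 1
  have hε : ∀ i ∈ univ, ε i = 1 ∨ ε i = -1 := fun i _ => by
    by_cases hi : i ∈ S <;> simp [ε, hi]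
  have hneg : #{i ∈ univ | ε i = -1} = a := by
    rw [← hS]; congr 1; ext i; by_cases hi : i ∈ S <;> simp [ε, hi]
  refine ⟨ε, fun i => hε i (mem_univ i), ?_, ?_⟩
  · simpa [hneg] using sum_add_two_mul_card_filter_eq_neg_one hε
  · rw [prod_eq_neg_one_pow_card_filter_eq_neg_one hε, hneg]

end SignVectors

@[to_additive]
def vertexProd {V R : Type*} [CommMonoid R] (f : V → R) : Sym2 V → R :=
  Sym2.lift ⟨fun x y => f x * f y, fun _ _ => mul_comm _ _⟩

@[to_additive]
theorem vertexProd_mk {V R : Type*} [CommMonoid R] (f : V → R) (x y : V) :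
    vertexProd f s(x, y) = f x * f y :=
  rfl

theorem vertexProd_eq_one_or_neg_one {V : Type*} {ε : V → ℤ} (hε : ∀ v, ε v = 1 ∨ ε v = -1)
    (e : Sym2 V) : vertexProd ε e = 1 ∨ vertexProd ε e = -1 := by
  induction e using Sym2.ind with
  | _ x y => rcases hε x with hx | hx <;> rcases hε y with hy | hy <;> simp [vertexProd_mk, hx, hy]

namespace SimpleGraph

variable {V : Type*}

theorem Subgraph.IsMatching.coe_toEdge_eq_iff {G : SimpleGraph V} {M : G.Subgraph}
    (h : M.IsMatching) {v : V} (hv : v ∈ M.verts) {e : Sym2 V} (he : e ∈ M.edgeSet) :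
    (h.toEdge ⟨v, hv⟩ : Sym2 V) = e ↔ v ∈ e := by
  refine ⟨fun hve => hve ▸ h.mem_coe_toEdge hv, fun hve => ?_⟩
  obtain ⟨w, rfl⟩ := Sym2.mem_iff_exists.mp hve
  rw [h.toEdge_eq_of_adj he]

variable [Fintype V] [DecidableEq V]

theorem two_nsmul_sum_edgeFinset {M : Type*} [AddCommMonoid M] (G : SimpleGraph V)
    [DecidableRel G.Adj] (g : Sym2 V → M) :
    2 • ∑ e ∈ G.edgeFinset, g e = ∑ p : V × V with G.Adj p.1 p.2, g s(p.1, p.2) := by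
  have hmaps : ∀ p ∈ ({p : V × V | G.Adj p.1 p.2} : Finset (V × V)), s(p.1, p.2) ∈ G.edgeFinset :=
    fun p hp => by simpa using (mem_filter.mp hp).2
  rw [← sum_fiberwise_of_maps_to hmaps, smul_sum]
  refine sum_congr rfl fun e he => ?_
  induction e using Sym2.ind with
  | _ x y =>
    have hxy : G.Adj x y := by simpa using he
    have hfiber : ({p ∈ ({p : V × V | G.Adj p.1 p.2} : Finset _) | s(p.1, p.2) = s(x, y)} :
        Finset (V × V)) = {(x, y), (y, x)} := by
      ext ⟨u, v⟩
      simp only [mem_filter, mem_univ, true_and, Sym2.eq_iff, mem_insert, mem_singleton,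
        Prod.mk.injEq]
      constructor
      · rintro ⟨-, h⟩; exact h
      · rintro (⟨rfl, rfl⟩ | ⟨rfl, rfl⟩)
        exacts [⟨hxy, by tauto⟩, ⟨hxy.symm, by tauto⟩]
    rw [hfiber, sum_pair (by simp [hxy.ne]), Sym2.eq_swap, two_nsmul]

theorem two_mul_sum_vertexProd_edgeFinset_top {R : Type*} [CommRing R] (f : V → R) :
    2 * ∑ e ∈ (⊤ : SimpleGraph V).edgeFinset, vertexProd f e = (∑ v, f v) ^ 2 - ∑ v, f v ^ 2 := by
  have hoff : ∀ x y, (if x ≠ y then f x * f y else 0) =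
      f x * f y - if x = y then f x * f y else 0 :=
    fun x y => by by_cases h : x = y <;> simp [h]
  rw [two_mul, ← two_nsmul, two_nsmul_sum_edgeFinset, sum_filter, Fintype.sum_prod_type]
  simp only [top_adj, vertexProd_mk, hoff, sum_sub_distrib, sum_ite_eq, mem_univ, if_true,
    ← sum_mul_sum, sq]

namespace Subgraph

variable {G : SimpleGraph V} {M : G.Subgraph}

@[to_additive]
theorem IsPerfectMatching.prod_vertexProd {R : Type*} [CommMonoid R] (hM : M.IsPerfectMatching)
    (f : V → R) : ∏ e ∈ M.edgeSet.toFinite.toFinset, vertexProd f e = ∏ v, f v := by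
  set g : V → Sym2 V := fun v => hM.1.toEdge ⟨v, hM.2 v⟩
  have hmaps : ∀ v ∈ (univ : Finset V), g v ∈ M.edgeSet.toFinite.toFinset :=
    fun v _ => by simp [g]
  rw [← prod_fiberwise_of_maps_to hmaps]
  refine prod_congr rfl fun e he => ?_
  rw [Set.Finite.mem_toFinset] at he
  induction e using Sym2.ind with
  | _ x y =>
    have hfiber : ({v | g v = s(x, y)} : Finset V) = {x, y} := by
      ext v
      simp only [mem_filter, mem_univ, true_and, mem_insert, mem_singleton, g,
        hM.1.coe_toEdge_eq_iff _ he, Sym2.mem_iff]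
    rw [hfiber, prod_pair (M.adj_sub he).ne, vertexProd_mk]

theorem IsPerfectMatching.two_mul_card_edgeSet (hM : M.IsPerfectMatching) :
    2 * #M.edgeSet.toFinite.toFinset = Fintype.card V := by
  have htwo : ∀ e : Sym2 V, vertexSum (fun _ => (1 : ℕ)) e = 2 := fun e => by
    induction e using Sym2.ind with
    | _ x y => rfl
  simpa [htwo, mul_comm] using hM.sum_vertexSum (fun _ => (1 : ℕ))

theorem IsPerfectMatching.prod_eq_neg_one_pow_of_sum_vertexProd_eq_zero {ε : V → ℤ}
    (hε : ∀ v, ε v = 1 ∨ ε v = -1) (hM : M.IsPerfectMatching)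
    (h : ∑ e ∈ M.edgeSet.toFinite.toFinset, vertexProd ε e = 0) :
    ∏ v, ε v = (-1) ^ (Fintype.card V / 4) := by
  have hσ : ∀ e ∈ M.edgeSet.toFinite.toFinset, vertexProd ε e = 1 ∨ vertexProd ε e = -1 :=
    fun e _ => vertexProd_eq_one_or_neg_one hε e
  have hcount := sum_add_two_mul_card_filter_eq_neg_one hσ
  rw [h, zero_add] at hcount
  have hcard : Fintype.card V / 4 = #{e ∈ M.edgeSet.toFinite.toFinset | vertexProd ε e = -1} := by
    have := hM.two_mul_card_edgeSet
    omega
  rw [← hM.prod_vertexProd, prod_eq_neg_one_pow_card_filter_eq_neg_one hσ, hcard]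

end Subgraph

end SimpleGraph

theorem sumE_Kc_edgeSet {m : ℕ} (σ : Sym2 (Fin m) → ℤ) :
    sumE σ (Kc m).edgeSet = ∑ e ∈ (⊤ : SimpleGraph (Fin m)).edgeFinset, σ e := by
  unfold sumE Kc
  rw [Set.toFinite_toFinset]
  rfl

theorem stmt8 : ∀ N : ℕ, ∃ n : ℕ, N < n ∧
    ∃ σ : Sym2 (Fin (4*n)) → ℤ,
      (∀ e ∈ (Kc (4*n)).edgeSet, σ e = 1 ∨ σ e = -1) ∧
      sumE σ (Kc (4*n)).edgeSet = 2 ∧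
      ∀ M : (Kc (4*n)).Subgraph, M.IsPerfectMatching → sumE σ M.edgeSet ≠ 0 := by
  intro N
  obtain ⟨ε, hε, hsum, hprod⟩ := exists_sign_vector_card_neg_eq
    (ι := Fin (4 * (4 * N ^ 2 + 8 * N + 3))) (a := 2 * (4 * N ^ 2 + 7 * N + 2))
    (by rw [Fintype.card_fin]; omega)
  refine ⟨4 * N ^ 2 + 8 * N + 3, by omega, vertexProd ε,
    fun e _ => vertexProd_eq_one_or_neg_one hε e, ?_, ?_⟩
  · have htop := SimpleGraph.two_mul_sum_vertexProd_edgeFinset_top ε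
    rw [sum_sq_eq_card_of_eq_one_or_neg_one hε, Fintype.card_fin] at htop
    rw [Fintype.card_fin] at hsum
    push_cast at hsum htop
    rw [show ∑ v, ε v = 4 * N + 4 by linarith] at htop
    rw [sumE_Kc_edgeSet]
    linarith
  · intro M hM hzero
    have hodd : Odd (4 * N ^ 2 + 8 * N + 3) := ⟨2 * N ^ 2 + 4 * N + 1, by ring⟩
    have hprodM := hM.prod_eq_neg_one_pow_of_sum_vertexProd_eq_zero hε hzero
    rw [hprod, Fintype.card_fin, Nat.mul_div_cancel_left _ (by norm_num),
      (even_two_mul _).neg_one_pow, hodd.neg_one_pow] at hprodM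
    norm_num at hprodM
end

section
/- Let k be a positive even integer, n = (k²+4)/4, and let σ be defined on K_{4n} with vertex partition (A,B), |A| = (k²+k)/2 + 2, |B| = (k²−k)/2 + 2, where edges between A and B get label +1 and all others get −1. Then every perfect matching M of K_{4n} satisfies σ(M) ≠ 0. -/
open Finset

theorem stmt10 (k n : ℕ) (hk : 0 < k) (hke : Even k) (hn : 4*n = k^2 + 4)
    (A B : Finset (Fin (4*n))) (hAB : Disjoint A B) (hU : A ∪ B = Finset.univ)
    (hA : 2*A.card = k^2 + k + 4) (hB : 2*B.card = k^2 - k + 4)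
    (σ : Sym2 (Fin (4*n)) → ℤ)
    (hσ : ∀ u v : Fin (4*n), u ≠ v →
      σ s(u,v) = (if (u ∈ A ∧ v ∈ B) ∨ (u ∈ B ∧ v ∈ A) then 1 else -1)) :
    ∀ M : (Kc (4*n)).Subgraph, M.IsPerfectMatching → sumE σ M.edgeSet ≠ 0 := by
  classical
  intro M hM hzero
  obtain ⟨hm, hs⟩ := hM
  have hex : ∀ v : Fin (4*n), ∃ w, M.Adj v w ∧ ∀ y, M.Adj v y → y = w :=
    fun v => hm (hs v)
  choose f hadj hun using hex
  have hff : ∀ v, f (f v) = v := fun v => (hun (f v) v (hadj v).symm).symm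
  have hne : ∀ v, f v ≠ v := fun v => fun h => (hadj v).ne (h.symm)
  set E := M.edgeSet.toFinite.toFinset with hEdef
  have hE : ∀ e, e ∈ E ↔ e ∈ M.edgeSet := fun e => M.edgeSet.toFinite.mem_toFinset
  set g : Fin (4*n) → Sym2 (Fin (4*n)) := fun v => s(v, f v) with hgdef
  have hg : ∀ v, g v ∈ E := fun v => (hE _).mpr ((hadj v) : M.Adj v (f v))
  -- each fiber of g has two elements
  have hfiber : ∀ e ∈ E, ∑ v ∈ univ.filter (fun v => g v = e), σ (g v) = 2 * σ e := by
    intro e he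
    induction e with
    | _ a b =>
      have hab : M.Adj a b := (hE _).mp he
      have hfa : f a = b := (hun a b hab).symm
      have hfb : f b = a := (hun b a hab.symm).symm
      have hset : univ.filter (fun v => g v = s(a, b)) = {a, b} := by
        ext v
        simp only [mem_filter, mem_univ, true_and, mem_insert, mem_singleton, hgdef]
        constructor
        · intro h
          rcases Sym2.eq_iff.mp h with ⟨h1, _⟩ | ⟨h1, h2⟩
          · exact Or.inl h1
          · exact Or.inr h1
        · rintro (rfl | rfl)
          · rw [hfa]
          · rw [hfb, Sym2.eq_swap]
      rw [hset]
      rw [Finset.sum_pair hab.ne]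
      have : g a = s(a, b) := by simp [hgdef, hfa]
      have h2 : g b = s(a, b) := by simp [hgdef, hfb, Sym2.eq_swap]
      rw [this, h2]; ring
  have hsum2 : ∑ v : Fin (4*n), σ (g v) = 2 * sumE σ M.edgeSet := by
    rw [sumE, ← Finset.sum_fiberwise_of_maps_to (g := g) (fun v _ => hg v), Finset.mul_sum]
    exact Finset.sum_congr rfl fun e he => hfiber e he
  -- rewrite each term via hσ
  have hterm : ∀ v, σ (g v) =
      (if (v ∈ A ∧ f v ∈ B) ∨ (v ∈ B ∧ f v ∈ A) then (1:ℤ) else -1) := by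
    intro v
    exact hσ v (f v) (fun h => hne v h.symm)
  set C := univ.filter (fun v => (v ∈ A ∧ f v ∈ B) ∨ (v ∈ B ∧ f v ∈ A)) with hCdef
  have hsum3 : ∑ v : Fin (4*n), σ (g v) = (C.card : ℤ) - ((4*(n:ℤ)) - (C.card : ℤ)) := by
    set N := Finset.filter (fun v => ¬((v ∈ A ∧ f v ∈ B) ∨ (v ∈ B ∧ f v ∈ A)))
      (Finset.univ : Finset (Fin (4*n))) with hN
    have hsp := Finset.card_filter_add_card_filter_not
      (s := (univ : Finset (Fin (4*n))))
      (p := fun v => (v ∈ A ∧ f v ∈ B) ∨ (v ∈ B ∧ f v ∈ A))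
    rw [Finset.card_univ, Fintype.card_fin, ← hCdef, ← hN] at hsp
    have hsp' : (C.card : ℤ) + (N.card : ℤ) = 4*(n:ℤ) := by exact_mod_cast hsp
    rw [Finset.sum_congr rfl (fun v _ => hterm v), Finset.sum_ite, Finset.sum_const,
      Finset.sum_const, nsmul_eq_mul, nsmul_eq_mul, ← hCdef, ← hN]
    linarith
  have hC2n : 2 * C.card = 4 * n := by
    have h0 : (0:ℤ) = (C.card : ℤ) - ((4*(n:ℤ)) - (C.card : ℤ)) := by
      rw [← hsum3, hsum2, hzero]; ring
    omega
  -- split C into A-side and B-side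
  set CA := A.filter (fun v => f v ∈ B) with hCAdef
  set CB := B.filter (fun v => f v ∈ A) with hCBdef
  have hsplit : C = CA ∪ CB := by
    ext v
    simp only [hCdef, hCAdef, hCBdef, mem_filter, mem_univ, true_and, mem_union]
  have hdisj : Disjoint CA CB :=
    (hAB.mono (Finset.filter_subset _ _) (Finset.filter_subset _ _))
  have hCcard : C.card = CA.card + CB.card := by rw [hsplit, Finset.card_union_of_disjoint hdisj]
  have hbij : CA.card = CB.card := by
    apply Finset.card_bij' (fun v _ => f v) (fun v _ => f v)
    · intro v hv
      simp only [hCAdef, mem_filter] at hv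
      simp only [hCBdef, mem_filter]
      exact ⟨hv.2, by rw [hff]; exact hv.1⟩
    · intro v hv
      simp only [hCBdef, mem_filter] at hv
      simp only [hCAdef, mem_filter]
      exact ⟨hv.2, by rw [hff]; exact hv.1⟩
    · intro v _; exact hff v
    · intro v _; exact hff v
  -- within-A vertices
  set SA := A.filter (fun v => f v ∈ A) with hSAdef
  have hApart : SA.card + CA.card = A.card := by
    have hCA' : CA = A.filter (fun v => ¬ f v ∈ A) := by
      ext v
      simp only [hCAdef, mem_filter, and_congr_right_iff]
      intro hv
      constructor
      · intro hB' hA'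
        exact (Finset.disjoint_left.mp hAB) hA' hB'
      · intro hA'
        have : f v ∈ A ∪ B := hU ▸ Finset.mem_univ _
        rcases Finset.mem_union.mp this with h | h
        · exact absurd h hA'
        · exact h
    rw [hCA']
    exact Finset.card_filter_add_card_filter_not _
  -- SA has even cardinality
  have hSAeven : Even SA.card := by
    have hz : ∑ _x ∈ SA, (1 : ZMod 2) = 0 := by
      apply Finset.sum_involution (g := fun a _ => f a)
      · intro a _; decide
      · intro a _ _; exact hne a
      · intro a ha
        simp only [hSAdef, mem_filter] at ha ⊢
        exact ⟨ha.2, by rw [hff]; exact ha.1⟩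
      · intro a _; exact hff a
    rw [Finset.sum_const, nsmul_eq_mul, mul_one] at hz
    have : (2 : ℕ) ∣ SA.card := by
      have := (ZMod.natCast_eq_zero_iff SA.card 2).mp hz
      exact this
    exact even_iff_two_dvd.mpr this
  -- final arithmetic
  obtain ⟨m, rfl⟩ := hke
  obtain ⟨t, ht⟩ := hSAeven
  have hCA_n : 2 * CA.card = 2 * n := by omega
  have hmm : (m + m)^2 = 4 * (m * m) := by ring
  have hmeven : Even (m * m + m) := by
    have := Nat.even_mul_succ_self m
    have h : m * (m + 1) = m * m + m := by ring
    rwa [h] at this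
  obtain ⟨s, hs'⟩ := hmeven
  omega
end

section
/- For every positive integer n and every function σ: E(K_{4n}) → {-1,1} with |σ(E(K_{4n}))| < n² + 11n + 2, there is a perfect matching M in K_{4n} with |σ(M)| ≤ 2. -/
open Finset

/-!
Let `N` be the graph of the edges with `σ = -1`. If `N` has a matching with `n - 1` edges,
completing it to a perfect matching `M` of `K_{4n}` gives `σ(M) ≤ -(n - 1) + (n + 1) = 2`.
Otherwise the matching number `t` of `N` is at most `n - 2`, and the Erdős–Gallai type bound
`2 |E(N)| + t² + t ≤ 2 t |V|` (for `|V| ≥ 3t + 1`) forces `σ(E(K_{4n})) = |E| - 2 |E(N)|` to be at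
least `n² + 11n + 2`. Applied to `σ` and `-σ`, this gives perfect matchings with `σ(M) ≤ 2` and
`σ(M') ≥ -2`. Writing perfect matchings as bijections `Fin (2n) × Bool ≃ V`, one passes from `M`
to `M'` by transpositions; each changes at most two edges, hence `σ` by at most `4`, so some
matching on the way has `|σ| ≤ 2`.

For the edge bound, take a maximum matching with vertex set `S`, `|S| = 2t`, and let `W` be the
other vertices. `W` is independent, and since there are no augmenting paths of length 3 and 5, a
partner of a vertex with two neighbours in `W` has no neighbour in `W`, and these partners are
pairwise non-adjacent. Counting degrees then gives the bound.
-/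

lemma card_image_univ_of_injective {V ι : Type*} [DecidableEq V] [Fintype ι]
    {m : ι × Bool → V} (hm : Function.Injective m) : #(univ.image m) = 2 * Fintype.card ι := by
  rw [card_image_of_injective _ hm, card_univ, Fintype.card_prod, Fintype.card_bool, mul_comm]

lemma card_filter_flip {ι : Type*} [Fintype ι] (p : ι × Bool → Prop) [DecidablePred p] :
    #{x : ι × Bool | p (x.1, !x.2)} = #{x | p x} :=
  card_nbij' (fun x => (x.1, !x.2)) (fun x => (x.1, !x.2)) (by simp [Set.MapsTo])
    (by simp [Set.MapsTo]) (by simp [Set.LeftInvOn]) (by simp [Set.RightInvOn, Set.LeftInvOn])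

section RangeUpdate

variable {α β : Type*} [DecidableEq α] {f : α → β} {x : α} {v w : β}

lemma Function.Injective.apply_notMem_range_update (hf : Function.Injective f) (hw : w ≠ f x) :
    f x ∉ Set.range (Function.update f x w) := by
  rintro ⟨y, hy⟩
  by_cases h : y = x
  · subst h
    exact hw (by simpa using hy)
  · rw [Function.update_of_ne h] at hy
    exact h (hf hy)

lemma Function.notMem_range_update (hv : v ∉ Set.range f) (hvw : v ≠ w) :
    v ∉ Set.range (Function.update f x w) := by
  rintro ⟨y, hy⟩
  by_cases h : y = x
  · subst h
    exact hvw (by simpa using hy.symm)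
  · rw [Function.update_of_ne h] at hy
    exact hv ⟨y, hy⟩

end RangeUpdate

namespace SimpleGraph

variable {V ι κ : Type*} (G : SimpleGraph V)

def IsPairMatching (m : ι × Bool → V) : Prop :=
  Function.Injective m ∧ ∀ i, G.Adj (m (i, false)) (m (i, true))

def IsMaximumPairMatching (m : ι × Bool → V) : Prop :=
  G.IsPairMatching m ∧ ∀ m' : Option ι × Bool → V, ¬ G.IsPairMatching m'

variable {G} {m : ι × Bool → V}

lemma isPairMatching_of_isEmpty [IsEmpty ι] : G.IsPairMatching m :=
  ⟨Function.injective_of_subsingleton m, isEmptyElim⟩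

lemma IsPairMatching.comp_equiv (hm : G.IsPairMatching m) (f : κ ≃ ι) :
    G.IsPairMatching (m ∘ Prod.map f id) :=
  ⟨hm.1.comp (f.injective.prodMap Function.injective_id), fun i => hm.2 (f i)⟩

lemma IsPairMatching.option_elim (hm : G.IsPairMatching m) {a b : V} (hab : G.Adj a b)
    (ha : a ∉ Set.range m) (hb : b ∉ Set.range m) :
    G.IsPairMatching fun x : Option ι × Bool => x.1.elim (bif x.2 then b else a) (m ⟨·, x.2⟩) := by
  have hab' : ∀ c j d, (bif c then b else a) ≠ m (j, d) := by
    rintro (_ | _) j d h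
    exacts [ha ⟨_, h.symm⟩, hb ⟨_, h.symm⟩]
  refine ⟨?_, fun i => ?_⟩
  · rintro ⟨_ | i, c⟩ ⟨_ | j, d⟩ h
    · cases c <;> cases d <;> first | rfl | exact absurd h hab.ne | exact absurd h.symm hab.ne
    · exact absurd h (hab' c j d)
    · exact absurd h.symm (hab' d i c)
    · simpa using hm.1 h
  · cases i
    exacts [hab, hm.2 _]

lemma IsPairMatching.update [DecidableEq ι] (hm : G.IsPairMatching m) {i : ι} {b : Bool} {w : V}
    (hw : w ∉ Set.range m) (hadj : G.Adj (m (i, b)) w) :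
    G.IsPairMatching (Function.update m (i, !b) w) := by
  refine ⟨?_, fun j => ?_⟩
  · intro x y h
    simp only [Function.update_apply] at h
    split_ifs at h with hx hy hy
    · rw [hx, hy]
    · exact absurd ⟨y, h.symm⟩ hw
    · exact absurd ⟨x, h⟩ hw
    · exact hm.1 h
  · by_cases hj : j = i
    · subst hj
      cases b
      · rw [Bool.not_false, Function.update_of_ne (by simp), Function.update_self]; exact hadj
      · rw [Bool.not_true, Function.update_self, Function.update_of_ne (by simp)]; exact hadj.symm
    · simpa [Function.update_apply, hj] using hm.2 j

namespace IsMaximumPairMatching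

variable (hm : G.IsMaximumPairMatching m)
include hm

lemma update [DecidableEq ι] {i : ι} {b : Bool} {w : V} (hw : w ∉ Set.range m)
    (hadj : G.Adj (m (i, b)) w) : G.IsMaximumPairMatching (Function.update m (i, !b) w) :=
  ⟨hm.1.update hw hadj, hm.2⟩

lemma not_adj_of_notMem_range {a b : V} (ha : a ∉ Set.range m) (hb : b ∉ Set.range m) :
    ¬ G.Adj a b :=
  fun hab => hm.2 _ (hm.1.option_elim hab ha hb)

/-- Re-pairing `m (i, b)` with `w` frees `m (i, !b)`, which could then be matched with `w'`. -/
lemma eq_of_adj_of_adj [DecidableEq ι] {i : ι} {b : Bool} {w w' : V} (hw : w ∉ Set.range m)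
    (hw' : w' ∉ Set.range m) (h : G.Adj (m (i, b)) w) (h' : G.Adj (m (i, !b)) w') : w = w' := by
  by_contra hne
  exact (hm.update hw h).not_adj_of_notMem_range
    (hm.1.1.apply_notMem_range_update fun hc => hw ⟨_, hc.symm⟩)
    (Function.notMem_range_update hw' (Ne.symm hne)) h'

/-- After the same re-pairing at `i`, the edge `m (i, !b) — m (j, !c)` would contradict
`eq_of_adj_of_adj` at `j`. -/
lemma not_adj_of_adj_of_adj [DecidableEq ι] {i j : ι} {b c : Bool} {w w' : V} (hij : i ≠ j)
    (hw : w ∉ Set.range m) (hw' : w' ∉ Set.range m) (hne : w ≠ w')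
    (h : G.Adj (m (i, b)) w) (h' : G.Adj (m (j, c)) w') : ¬ G.Adj (m (i, !b)) (m (j, !c)) := by
  intro hv
  have hji : ∀ d, ((j, d) : ι × Bool) ≠ (i, !b) := fun d hc => hij (congrArg Prod.fst hc).symm
  have := (hm.update hw h).eq_of_adj_of_adj (i := j) (b := c)
    (Function.notMem_range_update hw' (Ne.symm hne))
    (hm.1.1.apply_notMem_range_update fun hc => hw ⟨_, hc.symm⟩)
    (by rwa [Function.update_of_ne (hji c)]) (by rw [Function.update_of_ne (hji _)]; exact hv.symm)
  exact hw' ⟨_, this.symm⟩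

end IsMaximumPairMatching

section Counting

variable [DecidableEq V] [DecidableRel G.Adj] [Fintype ι]

variable (G) in
def matchedDegree (m : ι × Bool → V) (v : V) : ℕ := #{w ∈ univ.image m | G.Adj v w}

lemma matchedDegree_lt (hm : Function.Injective m) (x : ι × Bool) :
    G.matchedDegree m (m x) < 2 * Fintype.card ι := by
  rw [← card_image_univ_of_injective hm, matchedDegree]
  refine card_lt_card ⟨filter_subset _ _, fun h => ?_⟩
  simpa using h (mem_image_of_mem m (mem_univ x))

variable [Fintype V]

variable (G) in
def unmatchedDegree (m : ι × Bool → V) (v : V) : ℕ := #{w ∈ (univ.image m)ᶜ | G.Adj v w}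

lemma matchedDegree_add_unmatchedDegree (v : V) :
    G.matchedDegree m v + G.unmatchedDegree m v = G.degree v := by
  rw [matchedDegree, unmatchedDegree, card_filter, card_filter, sum_add_sum_compl, ← card_filter,
    ← neighborFinset_eq_filter, card_neighborFinset_eq_degree]

lemma unmatchedDegree_add_le (hm : Function.Injective m) (v : V) :
    G.unmatchedDegree m v + 2 * Fintype.card ι ≤ Fintype.card V := by
  rw [← card_image_univ_of_injective hm, ← card_compl_add_card (univ.image m)]
  exact Nat.add_le_add_right (card_filter_le _ _) _

lemma exists_adj_notMem_range_of_pos {v : V} (h : 0 < G.unmatchedDegree m v) :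
    ∃ w ∉ Set.range m, G.Adj v w := by
  obtain ⟨w, hw⟩ := card_pos.1 h
  obtain ⟨hw, hadj⟩ := mem_filter.1 hw
  exact ⟨w, by simpa using hw, hadj⟩

lemma exists_adj_notMem_range_ne {v : V} (h : 2 ≤ G.unmatchedDegree m v) (w' : V) :
    ∃ w ∉ Set.range m, w ≠ w' ∧ G.Adj v w := by
  obtain ⟨w, hw, hne⟩ := exists_mem_ne h w'
  obtain ⟨hw, hadj⟩ := mem_filter.1 hw
  exact ⟨w, by simpa using hw, hne, hadj⟩

namespace IsMaximumPairMatching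

variable (hm : G.IsMaximumPairMatching m)
include hm

lemma two_mul_card_edgeFinset :
    2 * #G.edgeFinset = ∑ x, (G.matchedDegree m (m x) + 2 * G.unmatchedDegree m (m x)) := by
  set S := univ.image m
  -- `Sᶜ` is independent, so the degree sum over `Sᶜ` counts the edges leaving `S` once more.
  have hout : ∀ v ∈ Sᶜ, G.degree v = #{w ∈ S | G.Adj v w} := by
    intro v hv
    rw [← matchedDegree_add_unmatchedDegree (m := m), unmatchedDegree, card_eq_zero.2, add_zero]
    · rfl
    refine filter_eq_empty_iff.2 fun w hw hvw => ?_
    simp only [S, mem_compl, mem_image, mem_univ, true_and, not_exists] at hv hw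
    exact hm.not_adj_of_notMem_range (by simpa using hv) (by simpa using hw) hvw
  have hcount : ∑ v ∈ Sᶜ, #{w ∈ S | G.Adj v w} = ∑ v ∈ S, G.unmatchedDegree m v := by
    refine (sum_card_bipartiteAbove_eq_sum_card_bipartiteBelow (r := G.Adj)).trans
      (sum_congr rfl fun v _ => ?_)
    simp only [bipartiteBelow, unmatchedDegree, adj_comm]
    rfl
  rw [← sum_degrees_eq_twice_card_edges, ← sum_add_sum_compl S, sum_congr rfl hout, hcount,
    ← sum_add_distrib, sum_image fun x _ y _ h => hm.1.1 h]
  refine sum_congr rfl fun x _ => ?_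
  rw [← matchedDegree_add_unmatchedDegree (m := m)]
  ring

variable [DecidableEq ι]

lemma unmatchedDegree_flip_eq_zero {x : ι × Bool} (hx : 2 ≤ G.unmatchedDegree m (m x)) :
    G.unmatchedDegree m (m (x.1, !x.2)) = 0 := by
  by_contra h
  obtain ⟨w', hw', hadj'⟩ := exists_adj_notMem_range_of_pos (Nat.pos_of_ne_zero h)
  obtain ⟨w, hw, hne, hadj⟩ := exists_adj_notMem_range_ne hx w'
  exact hne (hm.eq_of_adj_of_adj hw hw' hadj hadj')

lemma not_adj_of_two_le_unmatchedDegree {i j : ι} {b c : Bool} (hne : (i, b) ≠ (j, c))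
    (hi : 2 ≤ G.unmatchedDegree m (m (i, !b))) (hj : 2 ≤ G.unmatchedDegree m (m (j, !c))) :
    ¬ G.Adj (m (i, b)) (m (j, c)) := by
  by_cases hij : i = j
  · subst hij
    obtain rfl : c = !b := by cases b <;> cases c <;> simp_all
    have := hm.unmatchedDegree_flip_eq_zero hi
    simp only [Bool.not_not] at this hj
    omega
  · obtain ⟨w, hw, hadj⟩ :=
      exists_adj_notMem_range_of_pos (by omega : 0 < G.unmatchedDegree m (m (i, !b)))
    obtain ⟨w', hw', hne', hadj'⟩ := exists_adj_notMem_range_ne hj w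
    simpa using hm.not_adj_of_adj_of_adj hij hw hw' (Ne.symm hne') hadj hadj'

lemma matchedDegree_add_card_le {x : ι × Bool} (hx : 2 ≤ G.unmatchedDegree m (m (x.1, !x.2))) :
    G.matchedDegree m (m x) + #{y : ι × Bool | 2 ≤ G.unmatchedDegree m (m (y.1, !y.2))} ≤
      2 * Fintype.card ι := by
  set P : Finset (ι × Bool) := {y | 2 ≤ G.unmatchedDegree m (m (y.1, !y.2))}
  have hsub : {w ∈ univ.image m | G.Adj (m x) w} ⊆ univ.image m \ P.image m := by
    intro w hw
    obtain ⟨⟨y, -, rfl⟩, hadj⟩ := by simpa only [mem_filter, mem_image] using hw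
    refine mem_sdiff.2 ⟨mem_image_of_mem m (mem_univ y), fun hyP => ?_⟩
    obtain ⟨z, hz, hzy⟩ := mem_image.1 hyP
    obtain rfl := hm.1.1 hzy
    exact hm.not_adj_of_two_le_unmatchedDegree (fun h => hadj.ne (congrArg m h)) hx
      (mem_filter.1 hz).2 hadj
  have hcard := card_sdiff_add_card_eq_card (image_subset_image (subset_univ P) (f := m))
  rw [card_image_of_injective _ hm.1.1, card_image_univ_of_injective hm.1.1] at hcard
  exact (Nat.add_le_add_right (card_le_card hsub) _).trans hcard.le

theorem two_mul_card_edgeFinset_add_le (hV : 3 * Fintype.card ι + 1 ≤ Fintype.card V) :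
    2 * #G.edgeFinset + Fintype.card ι * Fintype.card ι + Fintype.card ι ≤
      2 * Fintype.card ι * Fintype.card V := by
  set t := Fintype.card ι with ht
  set R : Finset (ι × Bool) := {x | 2 ≤ G.unmatchedDegree m (m x)}
  set P : Finset (ι × Bool) := {x | 2 ≤ G.unmatchedDegree m (m (x.1, !x.2))}
  have hPR : #P = #R := card_filter_flip (fun x => 2 ≤ G.unmatchedDegree m (m x))
  have hdisj : Disjoint R P := disjoint_filter.2 fun x _ hxR hxP => by
    have := hm.unmatchedDegree_flip_eq_zero hxP
    simp only [Bool.not_not, Prod.mk.eta] at this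
    omega
  have hrt : #R ≤ t := by
    have := card_le_univ (R ∪ P)
    rw [card_union_of_disjoint hdisj, Fintype.card_prod, Fintype.card_bool] at this
    omega
  -- A vertex of `R` has at most `|V| - 2t` neighbours outside `S`, one of `P` has none there and
  -- none in `P`, and any other vertex has at most one outside `S`.
  have hvertex : ∀ x, G.matchedDegree m (m x) + 2 * G.unmatchedDegree m (m x) +
      (if x ∈ P then #R + 1 else 0) + (if x ∈ R then 2 else 0) ≤
      2 * t + 1 + (if x ∈ R then 2 * (Fintype.card V - 2 * t) else 0) := by
    intro x
    have hdeg := matchedDegree_lt (G := G) hm.1.1 x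
    have hout := unmatchedDegree_add_le (G := G) hm.1.1 (m x)
    by_cases hxR : x ∈ R
    · rw [if_neg (Finset.disjoint_left.1 hdisj hxR), if_pos hxR, if_pos hxR]
      omega
    by_cases hxP : x ∈ P
    · have hP := (mem_filter.1 hxP).2
      have hzero := hm.unmatchedDegree_flip_eq_zero hP
      have hcard : G.matchedDegree m (m x) + #P ≤ 2 * t := hm.matchedDegree_add_card_le hP
      simp only [Bool.not_not, Prod.mk.eta] at hzero
      rw [if_pos hxP, if_neg hxR, if_neg hxR]
      omega
    · have hR : ¬ 2 ≤ G.unmatchedDegree m (m x) := fun h => hxR (mem_filter.2 ⟨mem_univ _, h⟩)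
      rw [if_neg hxP, if_neg hxR, if_neg hxR]
      omega
  have hsum := sum_le_sum fun x (_ : x ∈ univ) => hvertex x
  simp only [sum_add_distrib, ← hm.two_mul_card_edgeFinset, sum_ite_mem, univ_inter, sum_const,
    smul_eq_mul, card_univ, Fintype.card_prod, Fintype.card_bool, hPR, ← ht] at hsum
  obtain ⟨w, hw⟩ : ∃ w, Fintype.card V = w + 2 * t := ⟨_, (Nat.sub_add_cancel (by omega)).symm⟩
  rw [hw, Nat.add_sub_cancel] at hsum
  rw [hw]
  have hw' : t + 1 ≤ w := by omega
  -- what is left is `(t - #R) * (2w - t - #R - 3) ≥ 0`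
  rcases hrt.lt_or_eq with hlt | heq
  · nlinarith [Nat.mul_le_mul (Nat.succ_le_of_lt hlt) hw']
  · rw [heq] at hsum; nlinarith

end IsMaximumPairMatching

end Counting

lemma exists_isMaximumPairMatching_of_not_exists {K : ℕ}
    (h : ¬ ∃ m : Fin K × Bool → V, G.IsPairMatching m) :
    ∃ k < K, ∃ m : Fin k × Bool → V, G.IsMaximumPairMatching m := by
  induction K with
  | zero => exact absurd ⟨isEmptyElim, isPairMatching_of_isEmpty⟩ h
  | succ K ih =>
    by_cases hK : ∃ m : Fin K × Bool → V, G.IsPairMatching m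
    · obtain ⟨m, hm⟩ := hK
      exact ⟨K, K.lt_succ_self, m, hm, fun m' hm' => h ⟨_, hm'.comp_equiv (finSuccEquiv K)⟩⟩
    · obtain ⟨k, hk, hm⟩ := ih hK
      exact ⟨k, hk.trans K.lt_succ_self, hm⟩

end SimpleGraph

open Equiv

section Pairing

variable {V ι : Type*} [Fintype ι]

def pairSum (σ : Sym2 V → ℤ) (m : ι × Bool → V) : ℤ := ∑ i, σ s(m (i, false), m (i, true))

lemma abs_sum_sub_sum_le {f g : ι → ℤ} (D : Finset ι) (hD : ∀ i ∉ D, f i = g i) {c : ℤ}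
    (hc : ∀ i, |f i - g i| ≤ c) : |∑ i, f i - ∑ i, g i| ≤ #D * c := by
  rw [← sum_sub_distrib, ← sum_subset (subset_univ D) fun i _ hi => by rw [hD i hi, sub_self]]
  calc |∑ i ∈ D, (f i - g i)| ≤ ∑ i ∈ D, |f i - g i| := abs_sum_le_sum_abs _ _
    _ ≤ #D • c := sum_le_card_nsmul _ _ _ fun i _ => hc i
    _ = #D * c := nsmul_eq_mul _ _

lemma abs_pairSum_trans_swap_sub_le [DecidableEq V] {σ : Sym2 V → ℤ}
    (hσ : ∀ e : Sym2 V, ¬ e.IsDiag → |σ e| ≤ 1) (e : ι × Bool ≃ V) (a b : V) :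
    |pairSum σ (e.trans (swap a b)) - pairSum σ e| ≤ 4 := by
  classical
  have hdiag : ∀ (f : ι × Bool ≃ V) i, ¬ s(f (i, false), f (i, true)).IsDiag := fun f i => by
    simp [Sym2.mk_isDiag_iff]
  have hD : ∀ i ∉ ({(e.symm a).1, (e.symm b).1} : Finset ι),
      σ s((e.trans (swap a b)) (i, false), (e.trans (swap a b)) (i, true)) =
        σ s(e (i, false), e (i, true)) := by
    intro i hi
    have hne : ∀ c, e (i, c) ≠ a ∧ e (i, c) ≠ b := fun c => by
      constructor <;> rintro rfl <;> simp at hi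
    simp only [trans_apply, swap_apply_of_ne_of_ne (hne _).1 (hne _).2]
  refine (abs_sum_sub_sum_le (c := 2) _ hD fun i => ?_).trans ?_
  · exact (abs_sub _ _).trans (by linarith [hσ _ (hdiag (e.trans (swap a b)) i), hσ _ (hdiag e i)])
  · have h2 : (#({(e.symm a).1, (e.symm b).1} : Finset ι) : ℤ) ≤ 2 := mod_cast card_le_two
    linarith

lemma pairSum_neg (σ : Sym2 V → ℤ) (m : ι × Bool → V) : pairSum (-σ) m = -pairSum σ m := by
  simp [pairSum, sum_neg_distrib]

end Pairing

theorem Equiv.Perm.exists_abs_le_of_abs_swap_mul_sub_le {α : Type*} [Finite α] [DecidableEq α]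
    (F : Perm α → ℤ) {a : ℤ} (hF : ∀ f x y, |F (swap x y * f) - F f| ≤ 2 * a) (h1 : F 1 ≤ a)
    (g : Perm α) (hg : -a ≤ F g) : ∃ f, |F f| ≤ a := by
  induction g using Equiv.Perm.swap_induction_on with
  | one => exact ⟨1, abs_le.2 ⟨hg, h1⟩⟩
  | swap_mul f x y _ ih =>
    by_cases hf : -a ≤ F f
    · exact ih hf
    · refine ⟨swap x y * f, abs_le.2 ⟨hg, ?_⟩⟩
      linarith [(abs_le.1 (hF f x y)).2]

lemma Function.Embedding.exists_equiv_apply_eq {α β γ : Type*} [Fintype β] [Fintype γ]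
    (g : α ↪ β) (f : α ↪ γ) (h : Fintype.card β = Fintype.card γ) :
    ∃ e : β ≃ γ, ∀ a, e (g a) = f a := by
  classical
  obtain ⟨e, he⟩ := Set.MapsTo.exists_equiv_extend_of_card_eq (t := univ) (s := Set.range g)
    (f := Function.extend g f (Fintype.equivOfCardEq h)) (by simpa using h)
    (fun _ _ => mem_coe.2 (mem_univ _)) (by
      rintro _ ⟨a, rfl⟩ _ ⟨b, rfl⟩ hab
      rw [g.injective.extend_apply, g.injective.extend_apply] at hab
      rw [f.injective hab])
  refine ⟨e.trans (subtypeUnivEquiv mem_univ), fun a => ?_⟩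
  simp [he _ (Set.mem_range_self a), g.injective.extend_apply]

namespace SimpleGraph

variable {V ι : Type*}

def pairingSubgraph (e : ι × Bool ≃ V) : (⊤ : SimpleGraph V).Subgraph :=
  ⨆ i, (⊤ : SimpleGraph V).subgraphOfAdj (e.injective.ne (by simp) : e (i, false) ≠ e (i, true))

lemma isPerfectMatching_pairingSubgraph (e : ι × Bool ≃ V) :
    (pairingSubgraph e).IsPerfectMatching := by
  refine ⟨Subgraph.IsMatching.iSup (fun i => Subgraph.IsMatching.subgraphOfAdj _) ?_, ?_⟩
  · intro i j hij
    rw [(Subgraph.IsMatching.subgraphOfAdj _).support_eq_verts,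
      (Subgraph.IsMatching.subgraphOfAdj _).support_eq_verts]
    simp [Set.disjoint_left, hij]
  · intro v
    obtain ⟨⟨i, b⟩, rfl⟩ := e.surjective v
    simp only [pairingSubgraph, Subgraph.verts_iSup, subgraphOfAdj_verts, Set.mem_iUnion]
    exact ⟨i, by cases b <;> simp⟩

lemma edgeSet_pairingSubgraph (e : ι × Bool ≃ V) :
    (pairingSubgraph e).edgeSet = Set.range fun i => s(e (i, false), e (i, true)) := by
  simp [pairingSubgraph, Subgraph.edgeSet_iSup, edgeSet_subgraphOfAdj,
    Set.iUnion_singleton_eq_range]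

end SimpleGraph

lemma sumE_pairingSubgraph {N : ℕ} {ι : Type*} [Fintype ι] (σ : Sym2 (Fin N) → ℤ)
    (e : ι × Bool ≃ Fin N) : sumE σ (SimpleGraph.pairingSubgraph e).edgeSet = pairSum σ e := by
  classical
  rw [sumE, SimpleGraph.edgeSet_pairingSubgraph, Set.toFinite_toFinset, Set.toFinset_range,
    sum_image]
  · rfl
  · intro i _ j _ hij
    rcases Sym2.eq_iff.1 hij with ⟨h, -⟩ | ⟨h, -⟩
    · exact congrArg Prod.fst (e.injective h)
    · simpa using congrArg Prod.snd (e.injective h)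

lemma SimpleGraph.IsPairMatching.exists_pairSum_le {V ι κ : Type*} [Fintype V] [Fintype ι]
    [Fintype κ] {σ : Sym2 V → ℤ} (hσ : ∀ e : Sym2 V, ¬ e.IsDiag → σ e ≤ 1) {m : κ × Bool → V}
    (hm : (SimpleGraph.fromEdgeSet {e | σ e = -1}).IsPairMatching m) (j : κ ↪ ι)
    (hV : Fintype.card (ι × Bool) = Fintype.card V) :
    ∃ e : ι × Bool ≃ V, pairSum σ e ≤ Fintype.card ι - 2 * Fintype.card κ := by
  classical
  obtain ⟨e, he⟩ := (j.prodMap (Function.Embedding.refl Bool)).exists_equiv_apply_eq ⟨m, hm.1⟩ hV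
  have hmatched : ∑ i ∈ univ.map j, σ s(e (i, false), e (i, true)) = -Fintype.card κ := by
    have hk : ∀ k, σ s(e (j k, false), e (j k, true)) = -1 := fun k => by
      rw [show e (j k, false) = m (k, false) from he (k, false),
        show e (j k, true) = m (k, true) from he (k, true)]
      exact ((SimpleGraph.fromEdgeSet_adj _).1 (hm.2 k)).1
    simp [sum_map, hk]
  have hrest : ∑ i ∈ (univ.map j)ᶜ, σ s(e (i, false), e (i, true)) ≤ #(univ.map j)ᶜ • 1 :=
    sum_le_card_nsmul _ _ _ fun i _ => hσ _ (by simp [Sym2.mk_isDiag_iff])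
  rw [card_compl, card_map, card_univ, nsmul_eq_mul, mul_one,
    Nat.cast_sub (Fintype.card_le_of_embedding j)] at hrest
  refine ⟨e, ?_⟩
  rw [pairSum, ← sum_add_sum_compl (univ.map j), hmatched]
  linarith

lemma sum_edgeFinset_top_eq {V : Type*} [Fintype V] [DecidableEq V] {σ : Sym2 V → ℤ}
    (hσ : ∀ e : Sym2 V, ¬ e.IsDiag → σ e = 1 ∨ σ e = -1) :
    ∑ e ∈ (⊤ : SimpleGraph V).edgeFinset, σ e =
      #(⊤ : SimpleGraph V).edgeFinset - 2 * #{e ∈ (⊤ : SimpleGraph V).edgeFinset | σ e = -1} := by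
  have hpos : ∀ e ∈ {e ∈ (⊤ : SimpleGraph V).edgeFinset | ¬ σ e = -1}, σ e = 1 := fun e he => by
    obtain ⟨he, hne⟩ := mem_filter.1 he
    exact (hσ e (by simpa using he)).resolve_right hne
  rw [← sum_filter_add_sum_filter_not _ (σ · = -1), sum_congr rfl fun e he => (mem_filter.1 he).2,
    sum_congr rfl hpos, ← card_filter_add_card_filter_not (σ · = -1)]
  simp only [sum_const, Nat.cast_add]
  ring

theorem exists_pairSum_le_two {V : Type*} [Fintype V] [DecidableEq V] {n : ℕ}
    (hV : Fintype.card V = 4 * n) {σ : Sym2 V → ℤ}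
    (hσ : ∀ e : Sym2 V, ¬ e.IsDiag → σ e = 1 ∨ σ e = -1)
    (hsum : ∑ e ∈ (⊤ : SimpleGraph V).edgeFinset, σ e < n ^ 2 + 11 * n + 2) :
    ∃ e : Fin (2 * n) × Bool ≃ V, pairSum σ e ≤ 2 := by
  classical
  set G := SimpleGraph.fromEdgeSet {e : Sym2 V | σ e = -1}
  have hcard : Fintype.card (Fin (2 * n) × Bool) = Fintype.card V := by
    rw [Fintype.card_prod, Fintype.card_fin, Fintype.card_bool, hV]; ring
  by_cases hmatch : ∃ m : Fin (n - 1) × Bool → V, G.IsPairMatching m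
  · obtain ⟨m, hm⟩ := hmatch
    obtain ⟨e, he⟩ := hm.exists_pairSum_le (fun e he' => by rcases hσ e he' with h | h <;> omega)
      (Fin.castLEEmb (by omega)) hcard
    rw [Fintype.card_fin, Fintype.card_fin] at he
    exact ⟨e, by omega⟩
  obtain ⟨k, hk, m, hm⟩ := G.exists_isMaximumPairMatching_of_not_exists hmatch
  have hEG : 2 * #{e ∈ (⊤ : SimpleGraph V).edgeFinset | σ e = -1} + k * k + k ≤
      2 * k * (4 * n) := by
    have h := hm.two_mul_card_edgeFinset_add_le (by rw [Fintype.card_fin, hV]; omega)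
    rw [Fintype.card_fin, hV] at h
    convert h using 4
    refine congrArg card (Finset.ext fun e => ?_)
    simp [G, and_comm]
  have htop : 2 * #(⊤ : SimpleGraph V).edgeFinset = 4 * n * (4 * n - 1) := by
    rw [SimpleGraph.card_edgeFinset_top_eq_card_choose_two, hV, Nat.choose_two_right,
      Nat.mul_div_cancel' (Nat.even_mul_pred_self _).two_dvd]
  rw [sum_edgeFinset_top_eq hσ] at hsum
  have hkn : k + 2 ≤ n := by omega
  zify [show 1 ≤ 4 * n by omega] at htop hEG hkn
  -- `2 (Σ σ - n² - 11n - 2) ≥ (n - 2 - k) (14n - 2k + 2)`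
  nlinarith [mul_nonneg (by linarith : (0 : ℤ) ≤ n - 2 - k)
    (by linarith : (0 : ℤ) ≤ 14 * n - 2 * k + 2)]

theorem exists_abs_pairSum_le_two {V : Type*} [Fintype V] [DecidableEq V] {n : ℕ}
    (hV : Fintype.card V = 4 * n) {σ : Sym2 V → ℤ}
    (hσ : ∀ e : Sym2 V, ¬ e.IsDiag → σ e = 1 ∨ σ e = -1)
    (hsum : |∑ e ∈ (⊤ : SimpleGraph V).edgeFinset, σ e| < n ^ 2 + 11 * n + 2) :
    ∃ e : Fin (2 * n) × Bool ≃ V, |pairSum σ e| ≤ 2 := by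
  obtain ⟨e₁, h₁⟩ := exists_pairSum_le_two hV hσ ((le_abs_self _).trans_lt hsum)
  obtain ⟨e₂, h₂⟩ := exists_pairSum_le_two hV (σ := -σ)
    (fun e he => by rcases hσ e he with h | h <;> simp [h])
    (by simpa [sum_neg_distrib] using (neg_le_abs _).trans_lt hsum)
  have hstep : ∀ (f : Perm V) x y,
      |pairSum σ (e₁.trans (swap x y * f)) - pairSum σ (e₁.trans f)| ≤ 2 * 2 := fun f x y =>
    abs_pairSum_trans_swap_sub_le (fun e he => by rcases hσ e he with h | h <;> simp [h])
      (e₁.trans f) x y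
  obtain ⟨f, hf⟩ := Perm.exists_abs_le_of_abs_swap_mul_sub_le (fun f => pairSum σ (e₁.trans f))
    hstep h₁ (e₁.symm.trans e₂) (by
      rw [← trans_assoc, self_trans_symm, refl_trans]
      rw [pairSum_neg] at h₂
      exact neg_le_of_neg_le h₂)
  exact ⟨e₁.trans f, hf⟩

theorem stmt12_general (n : ℕ) (σ : Sym2 (Fin (4*n)) → ℤ)
    (hσ : ∀ e ∈ (Kc (4*n)).edgeSet, σ e = 1 ∨ σ e = -1)
    (hsum : |sumE σ (Kc (4*n)).edgeSet| < (n : ℤ)^2 + 11*(n : ℤ) + 2) :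
    ∃ M : (Kc (4*n)).Subgraph, M.IsPerfectMatching ∧
      |sumE σ M.edgeSet| ≤ 2 := by
  unfold Kc at hσ hsum ⊢
  have hsumE : sumE σ (⊤ : SimpleGraph _).edgeSet = ∑ e ∈ (⊤ : SimpleGraph _).edgeFinset, σ e := by
    rw [sumE, Set.toFinite_toFinset, SimpleGraph.edgeFinset]
  obtain ⟨e, he⟩ := exists_abs_pairSum_le_two (Fintype.card_fin _)
    (fun e he => hσ e (by simpa using he)) (hsumE ▸ hsum)
  exact ⟨SimpleGraph.pairingSubgraph e, SimpleGraph.isPerfectMatching_pairingSubgraph e,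
    by rwa [sumE_pairingSubgraph]⟩

theorem stmt12 (n : ℕ) (hn : 0 < n) (σ : Sym2 (Fin (4*n)) → ℤ)
    (hσ : ∀ e ∈ (Kc (4*n)).edgeSet, σ e = 1 ∨ σ e = -1)
    (hsum : |sumE σ (Kc (4*n)).edgeSet| < (n : ℤ)^2 + 11*(n : ℤ) + 2) :
    ∃ M : (Kc (4*n)).Subgraph, M.IsPerfectMatching ∧
      |sumE σ M.edgeSet| ≤ 2 :=
  stmt12_general n σ hσ hsum
end

section
/- For every positive integer n, if σ: E(K_{4n}) → {-1,1} is such that the graph formed by the edges with label +1 is the disjoint union of a complete graph on 3n+2 vertices and n−2 isolated vertices (taking complements for the −1 edges), then σ(E(K_{4n})) = n² + 11n + 2 and every perfect matching M of K_{4n} satisfies |σ(M)| ≥ 4. -/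
open Finset

lemma sum_pm {α : Type*} [DecidableEq α] (T A : Finset α) (h : A ⊆ T) :
    ∑ p ∈ T, (if p ∈ A then (1:ℤ) else -1) = 2 * A.card - T.card := by
  rw [Finset.sum_ite, Finset.sum_const, Finset.sum_const, Finset.filter_mem_eq_inter,
    Finset.inter_eq_right.mpr h, ← Finset.sdiff_eq_filter, Finset.card_sdiff_of_subset h]
  have hle := Finset.card_le_card h
  simp only [nsmul_eq_mul, mul_one, mul_neg_one]
  rw [Nat.cast_sub hle]
  ring

theorem stmt13 (n : ℕ) (hn : 2 ≤ n) (S : Finset (Fin (4*n))) (hS : S.card = 3*n + 2)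
    (σ : Sym2 (Fin (4*n)) → ℤ)
    (hσ : ∀ e ∈ (Kc (4*n)).edgeSet, σ e = 1 ∨ σ e = -1)
    (hσS : ∀ u v : Fin (4*n), u ≠ v → (σ s(u,v) = 1 ↔ u ∈ S ∧ v ∈ S)) :
    sumE σ (Kc (4*n)).edgeSet = (n : ℤ)^2 + 11*(n : ℤ) + 2 ∧
    ∀ M : (Kc (4*n)).Subgraph, M.IsPerfectMatching → 4 ≤ |sumE σ M.edgeSet| := by
  have hσval : ∀ u v : Fin (4*n), u ≠ v →
      σ s(u,v) = if u ∈ S ∧ v ∈ S then 1 else -1 := by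
    intro u v huv
    by_cases hm : u ∈ S ∧ v ∈ S
    · simp [hm, (hσS u v huv).mpr hm]
    · simp only [hm, if_false]
      have he : s(u,v) ∈ (Kc (4*n)).edgeSet := by
        simp [Kc, huv]
      rcases hσ _ he with h1 | h1
      · exact absurd ((hσS u v huv).mp h1) hm
      · exact h1
  constructor
  · -- Part 1
    have hE : (Kc (4*n)).edgeSet.toFinite.toFinset
        = (Finset.univ.offDiag).image (fun p : Fin (4*n) × Fin (4*n) => s(p.1, p.2)) := by
      ext e
      induction e using Sym2.ind with
      | _ a b =>
        simp only [Set.Finite.mem_toFinset, Finset.mem_image, Finset.mem_offDiag,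
          Finset.mem_univ, true_and, Kc, SimpleGraph.edgeSet_top, Set.mem_setOf_eq,
          Sym2.isDiag_iff_proj_eq, Prod.exists]
        constructor
        · intro h
          exact ⟨a, b, h, rfl⟩
        · rintro ⟨x, y, hxy, hxyab⟩
          rw [Sym2.eq_iff] at hxyab
          rcases hxyab with ⟨h1, h2⟩ | ⟨h1, h2⟩ <;> subst h1 <;> subst h2
          · exact hxy
          · exact hxy.symm
    have hsum2 : ∑ p ∈ Finset.univ.offDiag, σ (s(p.1, p.2))
        = 2 * sumE σ (Kc (4*n)).edgeSet := by
      rw [sumE, hE, Finset.sum_comp σ (fun p : Fin (4*n) × Fin (4*n) => s(p.1, p.2)),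
        Finset.mul_sum]
      apply Finset.sum_congr rfl
      intro e he
      rw [Finset.mem_image] at he
      obtain ⟨p, hp, hpe⟩ := he
      rw [Finset.mem_offDiag] at hp
      have hfib : Finset.univ.offDiag.filter
          (fun q : Fin (4*n) × Fin (4*n) => s(q.1, q.2) = e) = {p, (p.2, p.1)} := by
        ext q
        simp only [Finset.mem_filter, Finset.mem_offDiag, Finset.mem_univ, true_and,
          Finset.mem_insert, Finset.mem_singleton, ← hpe, Sym2.eq_iff]
        constructor
        · rintro ⟨hq, ⟨h1, h2⟩ | ⟨h1, h2⟩⟩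
          · left; exact Prod.ext h1 h2
          · right; exact Prod.ext h1 h2
        · rintro (rfl | rfl)
          · exact ⟨hp.2.2, Or.inl ⟨rfl, rfl⟩⟩
          · exact ⟨hp.2.2.symm, Or.inr ⟨rfl, rfl⟩⟩
      rw [hfib]
      have hcard : ({p, (p.2, p.1)} : Finset (Fin (4*n) × Fin (4*n))).card = 2 := by
        rw [Finset.card_insert_of_notMem, Finset.card_singleton]
        simp only [Finset.mem_singleton]
        intro h
        exact hp.2.2 (congrArg Prod.fst h ▸ rfl)
      rw [hcard]
      simp [two_nsmul, two_mul]
    have hlhs : ∑ p ∈ Finset.univ.offDiag, σ (s(p.1, p.2))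
        = 2 * (S.offDiag.card : ℤ) - ((Finset.univ : Finset (Fin (4*n))).offDiag.card : ℤ) := by
      rw [← sum_pm _ _ (Finset.offDiag_mono (Finset.subset_univ S))]
      apply Finset.sum_congr rfl
      intro p hp
      rw [Finset.mem_offDiag] at hp
      rw [hσval p.1 p.2 hp.2.2]
      congr 1
      simp only [Finset.mem_offDiag, eq_iff_iff]
      tauto
    have key : ∀ a : ℕ, 1 ≤ a → ((a*a - a : ℕ) : ℤ) = (a:ℤ)*((a:ℤ)-1) := by
      intro a ha
      have h1 : a ≤ a * a := Nat.le_mul_of_pos_left a (by omega)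
      rw [Nat.cast_sub h1]
      push_cast
      ring
    have hc1 : (S.offDiag.card : ℤ) = (3*(n:ℤ)+2) * (3*(n:ℤ)+1) := by
      rw [Finset.offDiag_card, hS, key (3*n+2) (by omega)]
      push_cast; ring
    have hc2 : ((Finset.univ : Finset (Fin (4*n))).offDiag.card : ℤ)
        = (4*(n:ℤ)) * (4*(n:ℤ)-1) := by
      rw [Finset.offDiag_card, Finset.card_univ, Fintype.card_fin, key (4*n) (by omega)]
      push_cast; ring
    rw [hlhs, hc1, hc2] at hsum2
    linarith
  · -- Part 2
    intro M hM
    obtain ⟨hm, hs⟩ := hM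
    have hex : ∀ v, ∃! w, M.Adj v w := fun v => hm (hs v)
    set f : Fin (4*n) → Fin (4*n) := fun v => (hex v).choose with hf
    have hadj : ∀ v, M.Adj v (f v) := fun v => (hex v).choose_spec.1
    have huniq : ∀ v w, M.Adj v w → w = f v := fun v w h => (hex v).choose_spec.2 w h
    have hff : ∀ v, f (f v) = v := fun v => (huniq (f v) v (hadj v).symm).symm
    have hne : ∀ v, v ≠ f v := fun v => (hadj v).ne
    have hEM : M.edgeSet.toFinite.toFinset
        = Finset.univ.image (fun v => s(v, f v)) := by
      ext e
      induction e using Sym2.ind with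
      | _ a b =>
        simp only [Set.Finite.mem_toFinset, SimpleGraph.Subgraph.mem_edgeSet,
          Finset.mem_image, Finset.mem_univ, true_and]
        constructor
        · intro h
          refine ⟨a, ?_⟩
          rw [← huniq a b h]
        · rintro ⟨v, hv⟩
          rw [Sym2.eq_iff] at hv
          rcases hv with ⟨h1, h2⟩ | ⟨h1, h2⟩
          · exact h1 ▸ h2 ▸ hadj v
          · exact h2 ▸ h1 ▸ (hadj v).symm
    set A : Finset (Fin (4*n)) := Finset.univ.filter (fun v => v ∈ S ∧ f v ∈ S) with hA
    have hsum2 : ∑ v : Fin (4*n), σ (s(v, f v)) = 2 * sumE σ M.edgeSet := by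
      rw [sumE, hEM, Finset.sum_comp σ (fun v => s(v, f v)), Finset.mul_sum]
      apply Finset.sum_congr rfl
      intro e he
      rw [Finset.mem_image] at he
      obtain ⟨v, _, hve⟩ := he
      have hfib : Finset.univ.filter (fun w => s(w, f w) = e) = {v, f v} := by
        ext w
        simp only [Finset.mem_filter, Finset.mem_univ, true_and, Finset.mem_insert,
          Finset.mem_singleton, ← hve, Sym2.eq_iff]
        constructor
        · rintro (⟨h1, h2⟩ | ⟨h1, h2⟩)
          · left; exact h1
          · right; exact h1
        · rintro (rfl | rfl)
          · left; exact ⟨rfl, rfl⟩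
          · right; exact ⟨rfl, hff v⟩
      rw [hfib]
      have hcard : ({v, f v} : Finset (Fin (4*n))).card = 2 := by
        rw [Finset.card_insert_of_notMem (by simpa using hne v), Finset.card_singleton]
      rw [hcard]
      simp [two_nsmul, two_mul]
    have hlhs : ∑ v : Fin (4*n), σ (s(v, f v)) = 2 * (A.card : ℤ) - (4*n : ℕ) := by
      have := sum_pm Finset.univ A (Finset.subset_univ A)
      rw [Finset.card_univ, Fintype.card_fin] at this
      rw [← this]
      apply Finset.sum_congr rfl
      intro v _
      rw [hσval v (f v) (hne v)]
      congr 1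
      simp [hA]
    -- cardinality bound on A
    have hAc : Finset.univ \ A ⊆ (Finset.univ \ S) ∪ (Finset.univ \ S).image f := by
      intro v hv
      simp only [Finset.mem_sdiff, Finset.mem_univ, true_and, hA, Finset.mem_filter,
        not_and_or] at hv
      rcases hv with h | h
      · exact Finset.mem_union_left _ (by simp [h])
      · refine Finset.mem_union_right _ ?_
        rw [Finset.mem_image]
        exact ⟨f v, by simp [h], hff v⟩
    have hScard : (Finset.univ \ S).card = n - 2 := by
      rw [Finset.card_sdiff_of_subset (Finset.subset_univ S), Finset.card_univ, Fintype.card_fin, hS]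
      omega
    have hAccard : (Finset.univ \ A).card ≤ 2 * (n - 2) := by
      calc (Finset.univ \ A).card ≤ ((Finset.univ \ S) ∪ (Finset.univ \ S).image f).card :=
            Finset.card_le_card hAc
        _ ≤ (Finset.univ \ S).card + ((Finset.univ \ S).image f).card :=
            Finset.card_union_le _ _
        _ ≤ (Finset.univ \ S).card + (Finset.univ \ S).card :=
            Nat.add_le_add_left (Finset.card_image_le) _
        _ = 2 * (n - 2) := by rw [hScard]; ring
    have hAcard : 2 * n + 4 ≤ A.card := by
      have h1 : (Finset.univ \ A).card = 4 * n - A.card := by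
        rw [Finset.card_sdiff_of_subset (Finset.subset_univ A), Finset.card_univ, Fintype.card_fin]
      have h2 : A.card ≤ 4 * n := by
        calc A.card ≤ Fintype.card (Fin (4*n)) := Finset.card_le_univ A
          _ = 4 * n := Fintype.card_fin _
      omega
    have hsumval : 4 ≤ sumE σ M.edgeSet := by
      have hc : (2 * n + 4 : ℤ) ≤ (A.card : ℤ) := by exact_mod_cast hAcard
      rw [hlhs] at hsum2
      push_cast at hsum2
      linarith
    calc (4:ℤ) ≤ sumE σ M.edgeSet := hsumval
      _ ≤ |sumE σ M.edgeSet| := le_abs_self _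
end

section
/- (Erdős–Gallai) If G is a graph of order 4n whose matching number equals n − k for some positive integer k, then G has at most C(4n,2) − C(3n+k,2) edges, with equality if and only if G is the complement of the disjoint union of a complete graph of order 3n+k and n−k isolated vertices. -/
open Finset

/-!
Fix a maximum matching `P` with `s` edges and let `U` be the set of the `N - 2s` unmatched
vertices. By maximality `U` is independent, and exchanges along augmenting paths with one, three
and five edges control the remaining edges. Write `d(e)` for the number of edges from a matching
edge `e` to `U` and `c(e, f)` for the number of edges between matching edges `e ≠ f`:
* if both ends of `e` have neighbours in `U`, they have exactly one, and it is common, so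
  `d(e) ≤ |U|`;
* `c(e, f) ≤ 4`, and if `c(e, f) = 4` the edges from `e ∪ f` to `U` all leave one vertex or all
  end at one vertex, so `d(e) + d(f) ≤ |U|`.
Hence `d(e) + d(f) + s c(e, f) ≤ 2|U| + 3s` when `s ≤ |U|`. Summing this over ordered pairs
`e ≠ f`, together with `2 d(e) ≤ 2|U|`, bounds `s (2 ∑ d + ∑ c)`, and `2|E| = 2s + 2 ∑ d + ∑ c`
turns the bound into `|E| ≤ C(N, 2) - C(N - s, 2)`.

In case of equality every `d(e) = |U|` and every `c(e, f) = 3`. So each matching edge has one end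
joined to all of `U` and one end joined to none of it; two ends of the second kind are never
adjacent (a five-edge augmenting path), so `c(e, f) = 3` supplies all other pairs. The ends of
the first kind form a set of size `s` joined to everything, and its complement is independent.
-/

lemma Nat.two_mul_choose_two_add_self (m : ℕ) : 2 * m.choose 2 + m = m * m := by
  rw [Nat.choose_two_right, Nat.mul_div_cancel' (Nat.even_mul_pred_self m).two_dvd]
  rcases m with _ | m
  · rfl
  · rw [Nat.add_sub_cancel]; ring

lemma Nat.two_mul_choose_two_add_eq (u s : ℕ) :
    2 * (u + s).choose 2 + (2 * s + s * (2 * u) + (s - 1) * (3 * s)) =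
      2 * (u + 2 * s).choose 2 := by
  have h₁ := Nat.two_mul_choose_two_add_self (u + s)
  have h₂ := Nat.two_mul_choose_two_add_self (u + 2 * s)
  rcases s with _ | m
  · simp
  · rw [Nat.add_sub_cancel]
    linarith

namespace Finset

variable {α β : Type*}

lemma exists_subset_singleton_product_of_card_lt {T : Finset (α × β)} {A : Finset α}
    {B : Finset β} (hT : T ⊆ A ×ˢ B) (hfan : ∀ p ∈ T, ∀ q ∈ T, p.1 ≠ q.1 → p.2 = q.2)
    (hcard : #A < #T) : ∃ a, T ⊆ {a} ×ˢ B := by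
  by_contra! hnot
  obtain ⟨p, hp⟩ := card_pos.1 (hcard.trans_le' (Nat.zero_le _))
  obtain ⟨q, hq, hqp⟩ := not_subset.1 (hnot p.1)
  have hq₁ : q.1 ≠ p.1 := fun h =>
    hqp (mem_product.2 ⟨mem_singleton.2 h, (mem_product.1 (hT hq)).2⟩)
  have hsub : T ⊆ A ×ˢ {p.2} := by
    intro r hr
    refine mem_product.2 ⟨(mem_product.1 (hT hr)).1, mem_singleton.2 ?_⟩
    by_cases hr₁ : r.1 = p.1
    · rw [hfan r hr q hq (hr₁ ▸ hq₁.symm), hfan q hq p hp hq₁]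
    · exact hfan r hr p hp hr₁
  have := card_le_card hsub
  rw [card_product, card_singleton, mul_one] at this
  omega

lemma card_le_of_snd_eq_of_fst_ne {T : Finset (α × β)} {A : Finset α} {B : Finset β}
    (hT : T ⊆ A ×ˢ B) (hfan : ∀ p ∈ T, ∀ q ∈ T, p.1 ≠ q.1 → p.2 = q.2) (hAB : #A ≤ #B) :
    #T ≤ #B := by
  by_cases hcard : #T ≤ #A
  · exact hcard.trans hAB
  obtain ⟨a, ha⟩ := exists_subset_singleton_product_of_card_lt hT hfan (not_le.1 hcard)
  simpa using card_le_card ha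

lemma sum_const_add_sum_offDiag_const [DecidableEq α] (s : Finset α) (a b : ℕ) :
    ∑ _x ∈ s, a + ∑ _p ∈ s.offDiag, (a + b) = #s * (#s * a + (#s - 1) * b) := by
  rw [sum_const, sum_const, offDiag_card, smul_eq_mul, smul_eq_mul, ← Nat.mul_sub_one]
  rcases s.eq_empty_or_nonempty with rfl | hs
  · simp
  · obtain ⟨m, hm⟩ := Nat.exists_eq_add_one_of_ne_zero hs.card_pos.ne'
    rw [hm, Nat.add_sub_cancel]
    ring

lemma sum_two_mul_add_sum_offDiag [DecidableEq α] (s : Finset α) (d : α → ℕ)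
    (c : α → α → ℕ) :
    ∑ x ∈ s, 2 * d x + ∑ p ∈ s.offDiag, (d p.1 + d p.2 + #s * c p.1 p.2) =
      #s * (2 * ∑ x ∈ s, d x + ∑ p ∈ s.offDiag, c p.1 p.2) := by
  have h := sum_union (disjoint_diag_offDiag s) (f := fun p => d p.1 + d p.2)
  rw [diag_union_offDiag, sum_diag, sum_product] at h
  simp only [sum_add_distrib, sum_const, smul_eq_mul, ← mul_sum] at h ⊢
  linarith

end Finset

namespace SimpleGraph

variable {V : Type*} {G : SimpleGraph V} {P : Finset (Sym2 V)}

/-! ### Matchings as finite sets of edges -/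

structure IsEdgeMatching (G : SimpleGraph V) (P : Finset (Sym2 V)) : Prop where
  subset_edgeSet : (P : Set (Sym2 V)) ⊆ G.edgeSet
  pairwise : (P : Set (Sym2 V)).Pairwise fun e f => ∀ v ∈ e, v ∉ f

structure IsMaximumEdgeMatching (G : SimpleGraph V) (P : Finset (Sym2 V)) : Prop
    extends G.IsEdgeMatching P where
  card_le : ∀ Q, G.IsEdgeMatching Q → #Q ≤ #P

namespace IsEdgeMatching

lemma notMem_of_mem (hP : G.IsEdgeMatching P) {e f : Sym2 V} (he : e ∈ P) (hf : f ∈ P)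
    (hef : e ≠ f) {v : V} (hv : v ∈ e) : v ∉ f :=
  hP.pairwise he hf hef v hv

lemma eq_of_mem_of_mem (hP : G.IsEdgeMatching P) {e f : Sym2 V} (he : e ∈ P) (hf : f ∈ P)
    {v : V} (hve : v ∈ e) (hvf : v ∈ f) : e = f := by
  by_contra hef
  exact hP.notMem_of_mem he hf hef hve hvf

lemma mono (hP : G.IsEdgeMatching P) {Q : Finset (Sym2 V)} (hQP : Q ⊆ P) :
    G.IsEdgeMatching Q :=
  ⟨(coe_subset.2 hQP).trans hP.subset_edgeSet, hP.pairwise.mono (coe_subset.2 hQP)⟩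

lemma union [DecidableEq V] (hP : G.IsEdgeMatching P) {Q : Finset (Sym2 V)}
    (hQ : G.IsEdgeMatching Q) (hPQ : ∀ e ∈ P, ∀ f ∈ Q, ∀ v ∈ e, v ∉ f) :
    G.IsEdgeMatching (P ∪ Q) where
  subset_edgeSet := by
    rw [coe_union]
    exact Set.union_subset hP.subset_edgeSet hQ.subset_edgeSet
  pairwise := by
    rw [coe_union, Set.pairwise_union]
    exact ⟨hP.pairwise, hQ.pairwise, fun e he f hf _ =>
      ⟨hPQ e he f hf, fun v hvf hve => hPQ e he f hf v hve hvf⟩⟩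

def toSubgraph (hP : G.IsEdgeMatching P) : G.Subgraph where
  verts := {v | ∃ e ∈ P, v ∈ e}
  Adj u v := s(u, v) ∈ P
  adj_sub h := hP.subset_edgeSet h
  edge_vert h := ⟨_, h, Sym2.mem_mk_left _ _⟩
  symm := ⟨fun _ _ h => by rwa [Sym2.eq_swap]⟩

lemma edgeSet_toSubgraph (hP : G.IsEdgeMatching P) : hP.toSubgraph.edgeSet = P := by
  ext e
  induction e using Sym2.ind
  exact Iff.rfl

lemma isMatching_toSubgraph (hP : G.IsEdgeMatching P) : hP.toSubgraph.IsMatching := by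
  intro v hv
  obtain ⟨e, he, hve⟩ := hv
  obtain ⟨w, rfl⟩ := Sym2.mem_iff_exists.1 hve
  refine ⟨w, he, fun y hy => ?_⟩
  by_contra hyw
  exact hP.pairwise hy he (fun h => hyw (Sym2.congr_right.1 h)) v
    (Sym2.mem_mk_left _ _) (Sym2.mem_mk_left _ _)

end IsEdgeMatching

lemma Subgraph.IsMatching.isEdgeMatching {M : G.Subgraph} (hM : M.IsMatching)
    (hfin : M.edgeSet.Finite) : G.IsEdgeMatching hfin.toFinset where
  subset_edgeSet := by simpa using M.edgeSet_subset
  pairwise := by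
    intro e he f hf hef v hve hvf
    simp only [Set.Finite.coe_toFinset] at he hf
    obtain ⟨a, rfl⟩ := Sym2.mem_iff_exists.1 hve
    obtain ⟨b, rfl⟩ := Sym2.mem_iff_exists.1 hvf
    exact hef (by rw [hM.eq_of_adj_left (Subgraph.mem_edgeSet.1 he) (Subgraph.mem_edgeSet.1 hf)])

lemma exists_isMaximumEdgeMatching [Finite V] {s : ℕ}
    (hex : ∃ M : G.Subgraph, M.IsMatching ∧ M.edgeSet.ncard = s)
    (hmax : ∀ M : G.Subgraph, M.IsMatching → M.edgeSet.ncard ≤ s) :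
    ∃ P, G.IsMaximumEdgeMatching P ∧ #P = s := by
  obtain ⟨M, hM, rfl⟩ := hex
  have hcard : #M.edgeSet.toFinite.toFinset = M.edgeSet.ncard :=
    (Set.ncard_eq_toFinset_card _ _).symm
  refine ⟨_, ⟨hM.isEdgeMatching _, fun Q hQ => ?_⟩, hcard⟩
  simpa [hQ.edgeSet_toSubgraph, hcard] using hmax _ hQ.isMatching_toSubgraph

lemma card_interedges_comm [DecidableRel G.Adj] (s t : Finset V) :
    #(G.interedges s t) = #(G.interedges t s) :=
  card_nbij' Prod.swap Prod.swap (fun _ h => G.swap_mem_interedges_iff.2 h)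
    (fun _ h => G.swap_mem_interedges_iff.2 h) (fun _ _ => rfl) (fun _ _ => rfl)

section DecidableEq

variable [DecidableEq V]

def matchedVerts (P : Finset (Sym2 V)) : Finset V := P.biUnion Sym2.toFinset

lemma IsEdgeMatching.disjoint_toFinset (hP : G.IsEdgeMatching P) {e f : Sym2 V} (he : e ∈ P)
    (hf : f ∈ P) (hef : e ≠ f) : Disjoint e.toFinset f.toFinset :=
  Finset.disjoint_left.2 fun _ hve hvf =>
    hP.pairwise he hf hef _ (Sym2.mem_toFinset.1 hve) (Sym2.mem_toFinset.1 hvf)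

lemma IsEdgeMatching.card_toFinset (hP : G.IsEdgeMatching P) {e : Sym2 V} (he : e ∈ P) :
    #e.toFinset = 2 :=
  Sym2.card_toFinset_of_not_isDiag e (G.not_isDiag_of_mem_edgeSet (hP.subset_edgeSet he))

lemma IsEdgeMatching.card_matchedVerts (hP : G.IsEdgeMatching P) :
    #(matchedVerts P) = 2 * #P := by
  rw [matchedVerts, card_biUnion fun e he f hf hef => hP.disjoint_toFinset he hf hef,
    sum_congr rfl fun e he => hP.card_toFinset he, sum_const, smul_eq_mul, mul_comm]

/-! ### Counting edges between blocks of vertices -/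

section Interedges

variable [DecidableRel G.Adj]

/-- `G.interedges` counts ordered pairs: for disjoint `e`, `f` this is the number of edges between
them, but an edge is counted twice in `G.edgeCountBetween e e`. -/
def edgeCountBetween (G : SimpleGraph V) [DecidableRel G.Adj] (e f : Sym2 V) : ℕ :=
  #(G.interedges e.toFinset f.toFinset)

lemma card_interedges_union_left {s s' : Finset V} (h : Disjoint s s') (t : Finset V) :
    #(G.interedges (s ∪ s') t) = #(G.interedges s t) + #(G.interedges s' t) := by
  rw [← card_union_of_disjoint (G.interedges_disjoint_left h t)]
  congr 1
  ext
  simp only [mem_interedges_iff, mem_union, or_and_right]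

lemma card_interedges_union_right (s : Finset V) {t t' : Finset V} (h : Disjoint t t') :
    #(G.interedges s (t ∪ t')) = #(G.interedges s t) + #(G.interedges s t') := by
  rw [card_interedges_comm, card_interedges_union_left h, card_interedges_comm,
    card_interedges_comm t']

lemma IsEdgeMatching.card_interedges_matchedVerts_left (hP : G.IsEdgeMatching P)
    (t : Finset V) :
    #(G.interedges (matchedVerts P) t) = ∑ e ∈ P, #(G.interedges e.toFinset t) := by
  rw [matchedVerts, interedges_biUnion_left, card_biUnion]
  exact fun e he f hf hef => G.interedges_disjoint_left (hP.disjoint_toFinset he hf hef) t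

lemma IsEdgeMatching.card_interedges_matchedVerts_right (hP : G.IsEdgeMatching P)
    (s : Finset V) :
    #(G.interedges s (matchedVerts P)) = ∑ e ∈ P, #(G.interedges s e.toFinset) := by
  rw [card_interedges_comm, hP.card_interedges_matchedVerts_left]
  exact sum_congr rfl fun e _ => card_interedges_comm _ _

lemma edgeCountBetween_self {e : Sym2 V} (he : e ∈ G.edgeSet) : G.edgeCountBetween e e = 2 := by
  have hI : G.interedges e.toFinset e.toFinset = e.toFinset.offDiag := by
    ext ⟨x, y⟩
    simp only [mem_interedges_iff, mem_offDiag, Sym2.mem_toFinset]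
    refine ⟨fun h => ⟨h.1, h.2.1, G.ne_of_adj h.2.2⟩, fun h => ⟨h.1, h.2.1, ?_⟩⟩
    have hexy : e = s(x, y) :=
      Sym2.eq_of_ne_mem h.2.2 h.1 h.2.1 (Sym2.mem_mk_left x y) (Sym2.mem_mk_right x y)
    exact G.mem_edgeSet.1 (hexy ▸ he)
  rw [edgeCountBetween, hI, offDiag_card,
    Sym2.card_toFinset_of_not_isDiag e (G.not_isDiag_of_mem_edgeSet he)]

lemma IsEdgeMatching.edgeCountBetween_le_four (hP : G.IsEdgeMatching P) {e f : Sym2 V}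
    (he : e ∈ P) (hf : f ∈ P) : G.edgeCountBetween e f ≤ 4 :=
  (card_interedges_le_mul _ _ _).trans (by rw [hP.card_toFinset he, hP.card_toFinset hf])

lemma IsEdgeMatching.adj_of_edgeCountBetween_eq_four (hP : G.IsEdgeMatching P) {e f : Sym2 V}
    (he : e ∈ P) (hf : f ∈ P) (h : G.edgeCountBetween e f = 4) {x y : V} (hx : x ∈ e)
    (hy : y ∈ f) : G.Adj x y := by
  have hI : G.interedges e.toFinset f.toFinset = e.toFinset ×ˢ f.toFinset :=
    eq_of_subset_of_card_le (filter_subset _ _)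
      (by rw [card_product, hP.card_toFinset he, hP.card_toFinset hf]; exact h.ge)
  have : (x, y) ∈ G.interedges e.toFinset f.toFinset := by
    simp [hI, Sym2.mem_toFinset, hx, hy]
  exact (G.mem_interedges_iff.1 this).2.2

end Interedges

variable [Fintype V]

def unmatchedVerts (P : Finset (Sym2 V)) : Finset V := (matchedVerts P)ᶜ

lemma mem_unmatchedVerts {v : V} : v ∈ unmatchedVerts P ↔ ∀ e ∈ P, v ∉ e := by
  simp [unmatchedVerts, matchedVerts]

lemma exists_mem_of_notMem_unmatchedVerts {v : V} (hv : v ∉ unmatchedVerts P) :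
    ∃ e ∈ P, v ∈ e := by
  simpa using mt mem_unmatchedVerts.2 hv

lemma notMem_unmatchedVerts_of_forall_adj {v : V} (hv : ∀ u ∈ unmatchedVerts P, G.Adj v u) :
    v ∉ unmatchedVerts P :=
  fun h => G.irrefl (hv v h)

lemma IsEdgeMatching.card_eq_card_unmatchedVerts_add (hP : G.IsEdgeMatching P) :
    Fintype.card V = #(unmatchedVerts P) + 2 * #P := by
  rw [unmatchedVerts, card_compl, ← hP.card_matchedVerts]
  have := card_le_univ (matchedVerts P)
  omega

/-! ### Exchange arguments -/

namespace IsMaximumEdgeMatching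

variable (hP : G.IsMaximumEdgeMatching P)
include hP

lemma card_le_of_exchange {R N : Finset (Sym2 V)} (hR : R ⊆ P) (hN : G.IsEdgeMatching N)
    (hNR : ∀ g ∈ N, ∀ v ∈ g, v ∈ unmatchedVerts P ∨ ∃ e ∈ R, v ∈ e) : #N ≤ #R := by
  have hNP : ∀ g ∈ N, ∀ f ∈ P \ R, ∀ v ∈ g, v ∉ f := by
    intro g hg f hf v hv hvf
    rw [mem_sdiff] at hf
    rcases hNR g hg v hv with hU | ⟨e, he, hve⟩
    · exact mem_unmatchedVerts.1 hU f hf.1 hvf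
    · exact hf.2 (hP.eq_of_mem_of_mem (hR he) hf.1 hve hvf ▸ he)
  have hdisj : Disjoint N (P \ R) := Finset.disjoint_left.2 fun g hgN hgP =>
    hNP g hgN g hgP _ (Sym2.out_fst_mem g) (Sym2.out_fst_mem g)
  have h := hP.card_le _ (hN.union (hP.mono sdiff_subset) hNP)
  rw [card_union_of_disjoint hdisj, card_sdiff_of_subset hR] at h
  have := card_le_card hR
  omega

lemma not_adj_of_mem_unmatchedVerts {u v : V} (hu : u ∈ unmatchedVerts P)
    (hv : v ∈ unmatchedVerts P) : ¬G.Adj u v := by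
  intro huv
  have hN : G.IsEdgeMatching {s(u, v)} := ⟨by simpa using huv, by simp⟩
  have := hP.card_le_of_exchange (empty_subset P) hN (by simp [hu, hv])
  simp at this

lemma not_adj_and_adj {a b u v : V} (he : s(a, b) ∈ P) (hu : u ∈ unmatchedVerts P)
    (hv : v ∈ unmatchedVerts P) (huv : u ≠ v) : ¬(G.Adj a u ∧ G.Adj b v) := by
  rintro ⟨hau, hbv⟩
  have hab : a ≠ b := G.ne_of_adj (hP.subset_edgeSet he)
  have hue := mem_unmatchedVerts.1 hu _ he
  have hve := mem_unmatchedVerts.1 hv _ he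
  simp only [Sym2.mem_iff, not_or] at hue hve
  have hN : G.IsEdgeMatching {s(a, u), s(b, v)} := by
    refine ⟨by simp [Set.insert_subset_iff, hau, hbv], ?_⟩
    simp only [coe_insert, coe_singleton, Set.pairwise_insert, Set.pairwise_singleton,
      Set.mem_singleton_iff, Sym2.mem_iff]
    grind
  have := hP.card_le_of_exchange (singleton_subset_iff.2 he) hN (by
    simp only [mem_insert, mem_singleton]
    grind)
  rw [card_insert_of_notMem (by simp only [mem_singleton, Sym2.eq_iff]; grind)] at this
  simp at this

lemma not_adj_and_adj_and_adj {a b c d u v : V} (he : s(a, b) ∈ P) (hf : s(c, d) ∈ P)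
    (hef : s(a, b) ≠ s(c, d)) (hu : u ∈ unmatchedVerts P) (hv : v ∈ unmatchedVerts P)
    (huv : u ≠ v) : ¬(G.Adj a u ∧ G.Adj c v ∧ G.Adj b d) := by
  rintro ⟨hau, hcv, hbd⟩
  have hab : a ≠ b := G.ne_of_adj (hP.subset_edgeSet he)
  have hcd : c ≠ d := G.ne_of_adj (hP.subset_edgeSet hf)
  have hue := mem_unmatchedVerts.1 hu _ he
  have hve := mem_unmatchedVerts.1 hv _ he
  have huf := mem_unmatchedVerts.1 hu _ hf
  have hvf := mem_unmatchedVerts.1 hv _ hf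
  have ha := hP.notMem_of_mem he hf hef (Sym2.mem_mk_left a b)
  have hb := hP.notMem_of_mem he hf hef (Sym2.mem_mk_right a b)
  simp only [Sym2.mem_iff, not_or] at hue hve huf hvf ha hb
  have hN : G.IsEdgeMatching {s(a, u), s(c, v), s(b, d)} := by
    refine ⟨by simp [Set.insert_subset_iff, hau, hcv, hbd], ?_⟩
    simp only [coe_insert, coe_singleton, Set.pairwise_insert, Set.pairwise_singleton,
      Set.mem_insert_iff, Set.mem_singleton_iff, Sym2.mem_iff]
    grind
  have := hP.card_le_of_exchange (R := {s(a, b), s(c, d)}) (by simp [insert_subset_iff, he, hf])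
    hN (by simp only [mem_insert, mem_singleton]; grind)
  rw [card_insert_of_notMem (by simp only [mem_insert, mem_singleton, Sym2.eq_iff]; grind),
    card_insert_of_notMem (by simp only [mem_singleton, Sym2.eq_iff]; grind),
    card_insert_of_notMem (by simpa using hef)] at this
  simp at this

end IsMaximumEdgeMatching

variable [DecidableRel G.Adj]

lemma card_interedges_univ : #(G.interedges univ univ) = 2 * #G.edgeFinset := by
  rw [← G.sum_degrees_eq_twice_card_edges, SimpleGraph.interedges, Rel.interedges_eq_biUnion,
    card_biUnion]
  · simp [SimpleGraph.degree, SimpleGraph.neighborFinset_eq_filter]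
  · intro x _ y _ hxy
    simp only [Function.onFun, Finset.disjoint_left, mem_map, Function.Embedding.coeFn_mk]
    rintro _ ⟨_, _, rfl⟩ ⟨_, _, h⟩
    exact hxy (Prod.ext_iff.1 h).1.symm

def edgeCountToUnmatched (G : SimpleGraph V) [DecidableRel G.Adj] (P : Finset (Sym2 V))
    (e : Sym2 V) : ℕ :=
  #(G.interedges e.toFinset (unmatchedVerts P))

lemma card_edgeFinset_add_choose_two_of_adj_iff (S : Finset V)
    (hS : ∀ u v, u ≠ v → (G.Adj u v ↔ ¬(u ∈ S ∧ v ∈ S))) :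
    #G.edgeFinset + (#S).choose 2 = (Fintype.card V).choose 2 := by
  have hI : G.interedges univ univ = univ.offDiag \ S.offDiag := by
    ext ⟨u, v⟩
    simp only [mem_interedges_iff, mem_univ, true_and, mem_sdiff, mem_offDiag]
    by_cases huv : u = v
    · simp [huv]
    · simp [hS u v huv, huv]
  have hle := card_le_card (offDiag_mono (subset_univ S))
  have h := G.card_interedges_univ
  rw [hI, card_sdiff_of_subset (offDiag_mono (subset_univ S))] at h
  rw [offDiag_card, offDiag_card, card_univ] at h hle
  have := Nat.two_mul_choose_two_add_self #S
  have := Nat.two_mul_choose_two_add_self (Fintype.card V)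
  omega

namespace IsMaximumEdgeMatching

variable (hP : G.IsMaximumEdgeMatching P) {e f : Sym2 V}
include hP

lemma two_mul_card_edgeFinset :
    2 * #G.edgeFinset = 2 * #P + 2 * ∑ e ∈ P, G.edgeCountToUnmatched P e +
      ∑ p ∈ P.offDiag, G.edgeCountBetween p.1 p.2 := by
  have hWU : Disjoint (matchedVerts P) (unmatchedVerts P) := disjoint_compl_right
  have hUU : #(G.interedges (unmatchedVerts P) (unmatchedVerts P)) = 0 :=
    card_eq_zero.2 <| eq_empty_of_forall_notMem fun p hp =>
      hP.not_adj_of_mem_unmatchedVerts (G.mem_interedges_iff.1 hp).1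
        (G.mem_interedges_iff.1 hp).2.1 (G.mem_interedges_iff.1 hp).2.2
  have hWW : #(G.interedges (matchedVerts P) (matchedVerts P)) =
      2 * #P + ∑ p ∈ P.offDiag, G.edgeCountBetween p.1 p.2 := by
    rw [hP.card_interedges_matchedVerts_left]
    simp_rw [hP.card_interedges_matchedVerts_right]
    change ∑ e ∈ P, ∑ f ∈ P, G.edgeCountBetween e f = _
    rw [← sum_product' (f := fun e f => G.edgeCountBetween e f), ← diag_union_offDiag,
      sum_union (disjoint_diag_offDiag P), sum_diag, mul_comm, ← smul_eq_mul, ← sum_const]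
    congr 1
    exact sum_congr rfl fun e he => edgeCountBetween_self (hP.subset_edgeSet he)
  have huniv : matchedVerts P ∪ unmatchedVerts P = univ := union_compl _
  rw [← card_interedges_univ, ← huniv, card_interedges_union_left hWU,
    card_interedges_union_right _ hWU, card_interedges_union_right _ hWU,
    card_interedges_comm (unmatchedVerts P), hUU, hWW, hP.card_interedges_matchedVerts_left]
  simp only [edgeCountToUnmatched]
  ring

lemma snd_eq_of_mem_interedges_unmatchedVerts (he : e ∈ P) {p q : V × V}
    (hp : p ∈ G.interedges e.toFinset (unmatchedVerts P))
    (hq : q ∈ G.interedges e.toFinset (unmatchedVerts P)) (hpq : p.1 ≠ q.1) : p.2 = q.2 := by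
  rw [mem_interedges_iff, Sym2.mem_toFinset] at hp hq
  have he' : e = s(p.1, q.1) :=
    Sym2.eq_of_ne_mem hpq hp.1 hq.1 (Sym2.mem_mk_left _ _) (Sym2.mem_mk_right _ _)
  by_contra h
  exact hP.not_adj_and_adj (he' ▸ he) hp.2.1 hq.2.1 h ⟨hp.2.2, hq.2.2⟩

lemma snd_eq_of_mem_interedges_of_forall_adj (he : e ∈ P) (hf : f ∈ P) (hef : e ≠ f)
    (hjoin : ∀ x ∈ e, ∀ y ∈ f, G.Adj x y) {p q : V × V}
    (hp : p ∈ G.interedges e.toFinset (unmatchedVerts P))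
    (hq : q ∈ G.interedges f.toFinset (unmatchedVerts P)) : p.2 = q.2 := by
  rw [mem_interedges_iff, Sym2.mem_toFinset] at hp hq
  by_contra h
  refine hP.not_adj_and_adj_and_adj (b := Sym2.Mem.other hp.1) (d := Sym2.Mem.other hq.1)
    (by rwa [Sym2.other_spec]) (by rwa [Sym2.other_spec])
    (by rwa [Sym2.other_spec, Sym2.other_spec]) hp.2.1 hq.2.1 h
    ⟨hp.2.2, hq.2.2, hjoin _ (Sym2.other_mem _) _ (Sym2.other_mem _)⟩

lemma edgeCountToUnmatched_le (he : e ∈ P) (hU : 2 ≤ #(unmatchedVerts P)) :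
    G.edgeCountToUnmatched P e ≤ #(unmatchedVerts P) :=
  card_le_of_snd_eq_of_fst_ne (filter_subset _ _)
    (fun _ hp _ hq => hP.snd_eq_of_mem_interedges_unmatchedVerts he hp hq)
    (by rwa [hP.card_toFinset he])

lemma exists_adj_of_edgeCountToUnmatched_eq (he : e ∈ P) (hU : 3 ≤ #(unmatchedVerts P))
    (h : G.edgeCountToUnmatched P e = #(unmatchedVerts P)) :
    ∃ a b, e = s(a, b) ∧ (∀ u ∈ unmatchedVerts P, G.Adj a u) ∧
      ∀ u ∈ unmatchedVerts P, ¬G.Adj b u := by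
  obtain ⟨a, ha⟩ := exists_subset_singleton_product_of_card_lt (filter_subset _ _)
    (fun _ hp _ hq => hP.snd_eq_of_mem_interedges_unmatchedVerts he hp hq)
    (by rw [hP.card_toFinset he]; change 2 < G.edgeCountToUnmatched P e; omega)
  have hI : G.interedges e.toFinset (unmatchedVerts P) = {a} ×ˢ unmatchedVerts P :=
    eq_of_subset_of_card_le ha (by rw [card_product, card_singleton, one_mul]; exact h.ge)
  obtain ⟨u, hu⟩ := card_pos.1 (by omega : 0 < #(unmatchedVerts P))
  have hau : (a, u) ∈ G.interedges e.toFinset (unmatchedVerts P) := by simp [hI, hu]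
  have hae : a ∈ e := Sym2.mem_toFinset.1 (G.mem_interedges_iff.1 hau).1
  refine ⟨a, Sym2.Mem.other hae, (Sym2.other_spec hae).symm, fun v hv => ?_, fun v hv hbv => ?_⟩
  · have : (a, v) ∈ G.interedges e.toFinset (unmatchedVerts P) := by simp [hI, hv]
    exact (G.mem_interedges_iff.1 this).2.2
  · have : (Sym2.Mem.other hae, v) ∈ G.interedges e.toFinset (unmatchedVerts P) :=
      G.mk_mem_interedges_iff.2 ⟨Sym2.mem_toFinset.2 (Sym2.other_mem hae), hv, hbv⟩
    simp only [hI, mem_product, mem_singleton] at this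
    exact Sym2.other_ne (G.not_isDiag_of_mem_edgeSet (hP.subset_edgeSet he)) hae this.1

lemma edgeCountToUnmatched_add_le (he : e ∈ P) (hf : f ∈ P) (hef : e ≠ f)
    (hU : 4 ≤ #(unmatchedVerts P)) (h : G.edgeCountBetween e f = 4) :
    G.edgeCountToUnmatched P e + G.edgeCountToUnmatched P f ≤ #(unmatchedVerts P) := by
  have hjoin : ∀ x ∈ e, ∀ y ∈ f, G.Adj x y := fun _ hx _ hy =>
    hP.adj_of_edgeCountBetween_eq_four he hf h hx hy
  rw [edgeCountToUnmatched, edgeCountToUnmatched, ← card_union_of_disjoint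
    (G.interedges_disjoint_left (hP.disjoint_toFinset he hf hef) _)]
  refine card_le_of_snd_eq_of_fst_ne (A := e.toFinset ∪ f.toFinset)
    (union_subset ((filter_subset _ _).trans (product_subset_product_left subset_union_left))
      ((filter_subset _ _).trans (product_subset_product_left subset_union_right)))
    (fun p hp q hq _ => ?_)
    ((card_union_le _ _).trans (by rw [hP.card_toFinset he, hP.card_toFinset hf]; exact hU))
  rcases mem_union.1 hp with hp | hp <;> rcases mem_union.1 hq with hq | hq
  · exact hP.snd_eq_of_mem_interedges_unmatchedVerts he hp hq ‹_›
  · exact hP.snd_eq_of_mem_interedges_of_forall_adj he hf hef hjoin hp hq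
  · exact hP.snd_eq_of_mem_interedges_of_forall_adj hf he hef.symm
      (fun y hy x hx => (hjoin x hx y hy).symm) hp hq
  · exact hP.snd_eq_of_mem_interedges_unmatchedVerts hf hp hq ‹_›

lemma edgeCountToUnmatched_add_add_le {p : Sym2 V × Sym2 V} (hp : p ∈ P.offDiag)
    (hU : 4 ≤ #(unmatchedVerts P)) (hPU : #P ≤ #(unmatchedVerts P)) :
    G.edgeCountToUnmatched P p.1 + G.edgeCountToUnmatched P p.2 +
      #P * G.edgeCountBetween p.1 p.2 ≤ 2 * #(unmatchedVerts P) + 3 * #P := by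
  obtain ⟨he, hf, hef⟩ := mem_offDiag.1 hp
  rcases (hP.edgeCountBetween_le_four he hf).lt_or_eq with hlt | h4
  · have := Nat.mul_le_mul_left #P (Nat.le_of_lt_succ hlt)
    have := hP.edgeCountToUnmatched_le he (by omega)
    have := hP.edgeCountToUnmatched_le hf (by omega)
    omega
  · have := hP.edgeCountToUnmatched_add_le he hf hef hU h4
    rw [h4]
    omega

/-! ### The bound and its equality case -/

lemma two_mul_sum_add_sum_le (hU : 4 ≤ #(unmatchedVerts P)) (hPU : #P ≤ #(unmatchedVerts P)) :
    2 * ∑ e ∈ P, G.edgeCountToUnmatched P e + ∑ p ∈ P.offDiag, G.edgeCountBetween p.1 p.2 ≤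
      #P * (2 * #(unmatchedVerts P)) + (#P - 1) * (3 * #P) := by
  rcases P.eq_empty_or_nonempty with rfl | hne
  · simp
  refine Nat.le_of_mul_le_mul_left ?_ hne.card_pos
  rw [← sum_two_mul_add_sum_offDiag, ← sum_const_add_sum_offDiag_const]
  exact add_le_add
    (sum_le_sum fun e he => Nat.mul_le_mul_left 2 (hP.edgeCountToUnmatched_le he (by omega)))
    (sum_le_sum fun p hp => hP.edgeCountToUnmatched_add_add_le hp hU hPU)

lemma forall_eq_of_two_mul_sum_add_sum_eq (hU : 4 ≤ #(unmatchedVerts P))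
    (hPU : #P ≤ #(unmatchedVerts P))
    (h : 2 * ∑ e ∈ P, G.edgeCountToUnmatched P e + ∑ p ∈ P.offDiag, G.edgeCountBetween p.1 p.2 =
      #P * (2 * #(unmatchedVerts P)) + (#P - 1) * (3 * #P)) :
    (∀ e ∈ P, G.edgeCountToUnmatched P e = #(unmatchedVerts P)) ∧
      ∀ e ∈ P, ∀ f ∈ P, e ≠ f → G.edgeCountBetween e f = 3 := by
  rcases P.eq_empty_or_nonempty with rfl | hne
  · simp
  have hmul := congrArg (#P * ·) h
  simp only [← sum_two_mul_add_sum_offDiag, ← sum_const_add_sum_offDiag_const] at hmul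
  have hle₁ : ∀ e ∈ P, 2 * G.edgeCountToUnmatched P e ≤ 2 * #(unmatchedVerts P) :=
    fun e he => Nat.mul_le_mul_left 2 (hP.edgeCountToUnmatched_le he (by omega))
  have hle₂ := fun p hp => hP.edgeCountToUnmatched_add_add_le (p := p) hp hU hPU
  have := sum_le_sum hle₁
  have := sum_le_sum hle₂
  have hd := (sum_eq_sum_iff_of_le hle₁).1 (by omega)
  have hc := (sum_eq_sum_iff_of_le hle₂).1 (by omega)
  refine ⟨fun e he => by have := hd e he; omega, fun e he f hf hef => ?_⟩
  have hef' : G.edgeCountToUnmatched P e + G.edgeCountToUnmatched P f +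
      #P * G.edgeCountBetween e f = 2 * #(unmatchedVerts P) + 3 * #P :=
    hc (e, f) (mem_offDiag.2 ⟨he, hf, hef⟩)
  have := hd e he
  have := hd f hf
  exact Nat.eq_of_mul_eq_mul_left hne.card_pos (by omega)

section Extremal

variable (hU : 3 ≤ #(unmatchedVerts P))
  (hd : ∀ e ∈ P, G.edgeCountToUnmatched P e = #(unmatchedVerts P)) {X : Finset V}
  (hX : ∀ v, v ∈ X ↔ ∀ u ∈ unmatchedVerts P, G.Adj v u)
include hU hd hX

lemma exists_eq_mk_of_edgeCountToUnmatched_eq (he : e ∈ P) :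
    ∃ a b, e = s(a, b) ∧ a ∈ X ∧ b ∉ X ∧ ∀ u ∈ unmatchedVerts P, ¬G.Adj b u := by
  obtain ⟨a, b, rfl, ha, hb⟩ := hP.exists_adj_of_edgeCountToUnmatched_eq he hU (hd _ he)
  obtain ⟨u, hu⟩ := card_pos.1 (by omega : 0 < #(unmatchedVerts P))
  exact ⟨a, b, rfl, (hX a).2 ha, fun hbX => hb u hu ((hX b).1 hbX u hu), hb⟩

lemma mem_unmatchedVerts_or_of_notMem {v : V} (hv : v ∉ X) :
    v ∈ unmatchedVerts P ∨
      (∀ u ∈ unmatchedVerts P, ¬G.Adj v u) ∧ ∃ a ∈ X, s(a, v) ∈ P := by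
  by_cases hvU : v ∈ unmatchedVerts P
  · exact Or.inl hvU
  obtain ⟨e, he, hve⟩ := exists_mem_of_notMem_unmatchedVerts hvU
  obtain ⟨a, b, rfl, ha, -, hb⟩ := hP.exists_eq_mk_of_edgeCountToUnmatched_eq hU hd hX he
  rcases Sym2.mem_iff.1 hve with rfl | rfl
  · exact absurd ha hv
  · exact Or.inr ⟨hb, a, ha, he⟩

lemma not_adj_of_notMem {u v : V} (hu : u ∉ X) (hv : v ∉ X) : ¬G.Adj u v := by
  rcases hP.mem_unmatchedVerts_or_of_notMem hU hd hX hu with huU | ⟨hu', a, ha, hau⟩ <;>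
    rcases hP.mem_unmatchedVerts_or_of_notMem hU hd hX hv with hvU | ⟨hv', b, hb, hbv⟩
  · exact hP.not_adj_of_mem_unmatchedVerts huU hvU
  · exact fun h => hv' u huU h.symm
  · exact hu' v hvU
  by_cases hab : s(a, u) = s(b, v)
  · rcases Sym2.eq_iff.1 hab with ⟨-, rfl⟩ | ⟨rfl, -⟩
    · exact G.irrefl
    · exact absurd ha hv
  obtain ⟨x, hx, y, hy, hxy⟩ := one_lt_card.1 (by omega : 1 < #(unmatchedVerts P))
  exact fun h => hP.not_adj_and_adj_and_adj hau hbv hab hx hy hxy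
    ⟨(hX a).1 ha x hx, (hX b).1 hb y hy, h⟩

lemma card_eq_of_edgeCountToUnmatched_eq : #X = #P := by
  have hXP : X = P.biUnion fun e => {v ∈ e.toFinset | v ∈ X} := by
    ext v
    simp only [mem_biUnion, mem_filter, Sym2.mem_toFinset]
    refine ⟨fun hv => ?_, fun ⟨_, _, _, hv⟩ => hv⟩
    obtain ⟨e, he, hve⟩ :=
      exists_mem_of_notMem_unmatchedVerts (notMem_unmatchedVerts_of_forall_adj ((hX v).1 hv))
    exact ⟨e, he, hve, hv⟩
  rw [hXP, card_biUnion fun e he f hf hef =>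
    (hP.disjoint_toFinset he hf hef).mono (filter_subset _ _) (filter_subset _ _),
    card_eq_sum_ones]
  refine sum_congr rfl fun e he => card_eq_one.2 ?_
  obtain ⟨a, b, rfl, ha, hb, -⟩ := hP.exists_eq_mk_of_edgeCountToUnmatched_eq hU hd hX he
  refine ⟨a, ext fun v => ?_⟩
  simp only [mem_filter, Sym2.mem_toFinset, Sym2.mem_iff, mem_singleton]
  constructor
  · rintro ⟨rfl | rfl, hv⟩
    · rfl
    · exact absurd hv hb
  · rintro rfl
    exact ⟨Or.inl rfl, ha⟩

lemma adj_of_mem (hc : ∀ e ∈ P, ∀ f ∈ P, e ≠ f → G.edgeCountBetween e f = 3) {u v : V}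
    (hu : u ∈ X) (huv : u ≠ v) : G.Adj u v := by
  obtain ⟨e, he, hue⟩ :=
    exists_mem_of_notMem_unmatchedVerts (notMem_unmatchedVerts_of_forall_adj ((hX u).1 hu))
  obtain ⟨a, b, rfl, -, hb, -⟩ := hP.exists_eq_mk_of_edgeCountToUnmatched_eq hU hd hX he
  obtain rfl : u = a := (Sym2.mem_iff.1 hue).resolve_right fun h => hb (h ▸ hu)
  by_cases hvU : v ∈ unmatchedVerts P
  · exact (hX u).1 hu v hvU
  obtain ⟨f, hf, hvf⟩ := exists_mem_of_notMem_unmatchedVerts hvU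
  by_cases hef : s(u, b) = f
  · subst hef
    obtain rfl : v = b := (Sym2.mem_iff.1 hvf).resolve_left huv.symm
    exact hP.subset_edgeSet he
  obtain ⟨c, d, rfl, -, hd', -⟩ := hP.exists_eq_mk_of_edgeCountToUnmatched_eq hU hd hX hf
  have hI : G.interedges s(u, b).toFinset s(c, d).toFinset =
      (s(u, b).toFinset ×ˢ s(c, d).toFinset).erase (b, d) := by
    refine eq_of_subset_of_card_le
      (fun p hp => mem_erase.2 ⟨fun hpbd => ?_, filter_subset _ _ hp⟩) ?_
    · rw [hpbd] at hp
      exact hP.not_adj_of_notMem hU hd hX hb hd' (G.mk_mem_interedges_iff.1 hp).2.2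
    · rw [card_erase_of_mem (by simp), card_product, hP.card_toFinset he, hP.card_toFinset hf]
      exact (hc _ he _ hf hef).ge
  have huv' : (u, v) ∈ G.interedges s(u, b).toFinset s(c, d).toFinset := by
    rw [hI, mem_erase]
    exact ⟨fun h => G.ne_of_adj (hP.subset_edgeSet he) (Prod.ext_iff.1 h).1, by simp [hvf]⟩
  exact (G.mk_mem_interedges_iff.1 huv').2.2

end Extremal

theorem exists_adj_iff_of_edgeCount_eq (hU : 3 ≤ #(unmatchedVerts P))
    (hd : ∀ e ∈ P, G.edgeCountToUnmatched P e = #(unmatchedVerts P))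
    (hc : ∀ e ∈ P, ∀ f ∈ P, e ≠ f → G.edgeCountBetween e f = 3) :
    ∃ S : Finset V, #S = Fintype.card V - #P ∧
      ∀ u v, u ≠ v → (G.Adj u v ↔ ¬(u ∈ S ∧ v ∈ S)) := by
  set X : Finset V := {v | ∀ u ∈ unmatchedVerts P, G.Adj v u}
  have hX : ∀ v, v ∈ X ↔ ∀ u ∈ unmatchedVerts P, G.Adj v u := fun v => by simp [X]
  refine ⟨Xᶜ, by rw [card_compl, hP.card_eq_of_edgeCountToUnmatched_eq hU hd hX],
    fun u v huv => ?_⟩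
  simp only [mem_compl, not_and_or, not_not]
  refine ⟨fun h => ?_, fun h => h.elim (fun hu => hP.adj_of_mem hU hd hX hc hu huv)
    fun hv => (hP.adj_of_mem hU hd hX hc hv huv.symm).symm⟩
  by_contra! h'
  exact hP.not_adj_of_notMem hU hd hX h'.1 h'.2 h

theorem card_edgeFinset_add_choose_two_le (hU : 4 ≤ #(unmatchedVerts P))
    (hPU : #P ≤ #(unmatchedVerts P)) :
    #G.edgeFinset + (Fintype.card V - #P).choose 2 ≤ (Fintype.card V).choose 2 := by
  have := hP.two_mul_sum_add_sum_le hU hPU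
  have := hP.two_mul_card_edgeFinset
  have := Nat.two_mul_choose_two_add_eq #(unmatchedVerts P) #P
  rw [hP.card_eq_card_unmatchedVerts_add, Nat.add_sub_assoc (by omega),
    show 2 * #P - #P = #P by omega]
  omega

theorem card_edgeFinset_add_choose_two_eq_iff (hU : 4 ≤ #(unmatchedVerts P))
    (hPU : #P ≤ #(unmatchedVerts P)) :
    #G.edgeFinset + (Fintype.card V - #P).choose 2 = (Fintype.card V).choose 2 ↔
      ∃ S : Finset V, #S = Fintype.card V - #P ∧
        ∀ u v, u ≠ v → (G.Adj u v ↔ ¬(u ∈ S ∧ v ∈ S)) := by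
  refine ⟨fun h => ?_, fun ⟨S, hS, hadj⟩ => hS ▸ card_edgeFinset_add_choose_two_of_adj_iff S hadj⟩
  have := hP.two_mul_card_edgeFinset
  have := Nat.two_mul_choose_two_add_eq #(unmatchedVerts P) #P
  rw [hP.card_eq_card_unmatchedVerts_add, Nat.add_sub_assoc (by omega),
    show 2 * #P - #P = #P by omega] at h
  obtain ⟨hd, hc⟩ := hP.forall_eq_of_two_mul_sum_add_sum_eq hU hPU (by omega)
  exact hP.exists_adj_iff_of_edgeCount_eq (by omega) hd hc

end IsMaximumEdgeMatching

end DecidableEq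

end SimpleGraph

theorem stmt14_general (n k : ℕ) (hk : 0 < k) (hkn : k ≤ n)
    (G : SimpleGraph (Fin (4*n)))
    (hex : ∃ M : G.Subgraph, M.IsMatching ∧ M.edgeSet.ncard = n - k)
    (hmax : ∀ M : G.Subgraph, M.IsMatching → M.edgeSet.ncard ≤ n - k) :
    G.edgeSet.ncard ≤ (4*n).choose 2 - (3*n+k).choose 2 ∧
    (G.edgeSet.ncard = (4*n).choose 2 - (3*n+k).choose 2 ↔
      ∃ S : Finset (Fin (4*n)), S.card = 3*n + k ∧
        ∀ u v : Fin (4*n), u ≠ v → (G.Adj u v ↔ ¬(u ∈ S ∧ v ∈ S))) := by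
  classical
  have hsub : 4 * n - (n - k) = 3 * n + k := by omega
  obtain ⟨P, hP, hPcard⟩ := SimpleGraph.exists_isMaximumEdgeMatching hex hmax
  have hcard := hP.card_eq_card_unmatchedVerts_add
  rw [Fintype.card_fin, hPcard] at hcard
  have hle := hP.card_edgeFinset_add_choose_two_le (by omega) (by omega)
  have hiff := hP.card_edgeFinset_add_choose_two_eq_iff (by omega) (by omega)
  rw [Fintype.card_fin, hPcard, hsub] at hle hiff
  rw [← SimpleGraph.coe_edgeFinset, Set.ncard_coe_finset, ← hiff]
  omega

theorem stmt14 (n k : ℕ) (hn : 0 < n) (hk : 0 < k) (hkn : k ≤ n)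
    (G : SimpleGraph (Fin (4*n)))
    (hex : ∃ M : G.Subgraph, M.IsMatching ∧ M.edgeSet.ncard = n - k)
    (hmax : ∀ M : G.Subgraph, M.IsMatching → M.edgeSet.ncard ≤ n - k) :
    G.edgeSet.ncard ≤ (4*n).choose 2 - (3*n+k).choose 2 ∧
    (G.edgeSet.ncard = (4*n).choose 2 - (3*n+k).choose 2 ↔
      ∃ S : Finset (Fin (4*n)), S.card = 3*n + k ∧
        ∀ u v : Fin (4*n), u ≠ v → (G.Adj u v ↔ ¬(u ∈ S ∧ v ∈ S))) :=
  stmt14_general n k hk hkn G hex hmax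
end

section
/- Let σ: E(K_{4n}) → {-1,1} with σ(E(K_{4n})) ≥ 0, let k ≥ 2, and suppose every perfect matching M satisfies |σ(M)| ≥ 2k. If moreover σ(M) > 0 for every perfect matching M, then the matching number of the graph G on V(K_{4n}) whose edges are the −1-labeled edges is at most n − k. -/
open Finset

def minusGraph (n : ℕ) (σ : Sym2 (Fin (4*n)) → ℤ) : SimpleGraph (Fin (4*n)) where
  Adj u v := u ≠ v ∧ σ s(u,v) = -1
  symm := by
    constructor
    intro u v h
    exact ⟨h.1.symm, by rw [Sym2.eq_swap]; exact h.2⟩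
  loopless := by
    constructor
    intro u h
    exact h.1 rfl

/-! Extend a matching of `−1`-edges with `ν` edges to a perfect matching `P` of `K_{4n}` by
pairing up the uncovered vertices arbitrarily. `P` has `2n` edges, at least `ν` of them labelled
`−1`, so `σ(P) ≤ 2n − 2ν`; as `σ(P) > 0`, the bound `|σ(P)| ≥ 2k` reads `2k ≤ 2n − 2ν`. -/
namespace SimpleGraph.Subgraph

variable {V : Type*} {G : SimpleGraph V} {M : G.Subgraph}

lemma IsMatching.ncard_verts_eq_two_mul_ncard_edgeSet [Finite V] (h : M.IsMatching) :
    M.verts.ncard = 2 * M.edgeSet.ncard := by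
  classical
  have := Fintype.ofFinite V
  have hedges : M.edgeSet.ncard = M.coe.edgeFinset.card := by
    rw [← image_coe_edgeSet_coe,
      Set.ncard_image_of_injective _ (Sym2.map.injective Subtype.val_injective),
      Set.ncard_eq_toFinset_card', Set.toFinset_card, SimpleGraph.edgeFinset_card]
  calc M.verts.ncard = ∑ _v : M.verts, 1 := by simp [Set.ncard_eq_toFinset_card']
    _ = ∑ v : M.verts, M.coe.degree v := Finset.sum_congr rfl fun v _ => by
      rw [coe_degree]; convert (isMatching_iff_forall_degree.mp h v v.2).symm
    _ = 2 * M.edgeSet.ncard := by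
      rw [hedges]; convert M.coe.sum_degrees_eq_twice_card_edges

lemma IsPerfectMatching.natCard_eq_two_mul_ncard_edgeSet [Finite V] (h : M.IsPerfectMatching) :
    Nat.card V = 2 * M.edgeSet.ncard := by
  rw [← h.1.ncard_verts_eq_two_mul_ncard_edgeSet, h.2.verts_eq_univ, Set.ncard_univ]

lemma IsMatching.exists_isPerfectMatching_top_edgeSet_superset [Finite V] (h : M.IsMatching)
    (hV : Even (Nat.card V)) :
    ∃ P : (⊤ : SimpleGraph V).Subgraph, P.IsPerfectMatching ∧ M.edgeSet ⊆ P.edgeSet := by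
  have hcompl : Even M.vertsᶜ.ncard := by
    have := Set.ncard_add_ncard_compl M.verts
    rw [h.ncard_verts_eq_two_mul_ncard_edgeSet] at this
    exact (Nat.even_add.mp (this ▸ hV)).mp (even_two_mul _)
  obtain ⟨N, hNverts, hN⟩ :=
    (IsClique.top (s := M.vertsᶜ)).even_iff_exists_isMatching (Set.toFinite _) |>.mp hcompl
  refine ⟨M.map (Hom.ofLE le_top) ⊔ N, ⟨(h.map_ofLE le_top).sup hN ?_, ?_⟩, ?_⟩
  · rw [(h.map_ofLE le_top).support_eq_verts, hN.support_eq_verts, hNverts]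
    simpa using disjoint_compl_right
  · intro v
    simp [hNverts]
  · simp [edgeSet_sup]

end SimpleGraph.Subgraph

lemma sumE_le_ncard_sub_two_mul {m : ℕ} {σ : Sym2 (Fin m) → ℤ} {A S : Set (Sym2 (Fin m))}
    (hAS : A ⊆ S) (hS : ∀ e ∈ S, σ e ≤ 1) (hA : ∀ e ∈ A, σ e = -1) :
    sumE σ S ≤ S.ncard - 2 * A.ncard := by
  have hsub : A.toFinite.toFinset ⊆ S.toFinite.toFinset :=
    Set.Finite.toFinset_subset_toFinset.mpr hAS
  have hrest := Finset.sum_le_card_nsmul (S.toFinite.toFinset \ A.toFinite.toFinset) σ 1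
    fun e he => hS e (Set.Finite.mem_toFinset _ |>.mp (Finset.mem_sdiff.mp he).1)
  have hminus : ∑ e ∈ A.toFinite.toFinset, σ e = -A.ncard := by
    rw [Finset.sum_congr rfl fun e he => hA e (Set.Finite.mem_toFinset _ |>.mp he),
      Set.ncard_eq_toFinset_card A A.toFinite]
    simp
  rw [sumE, ← Finset.sum_sdiff hsub, hminus]
  rw [Finset.card_sdiff_of_subset hsub, ← Set.ncard_eq_toFinset_card,
    ← Set.ncard_eq_toFinset_card, nsmul_eq_mul, mul_one,
    Nat.cast_sub (Set.ncard_le_ncard hAS)] at hrest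
  linarith

lemma eq_neg_one_of_mem_edgeSet_minusGraph {n : ℕ} {σ : Sym2 (Fin (4*n)) → ℤ}
    {e : Sym2 (Fin (4*n))} (he : e ∈ (minusGraph n σ).edgeSet) : σ e = -1 := by
  induction e using Sym2.ind with
  | h u v => exact he.2

theorem stmt15_general (n k : ℕ) (σ : Sym2 (Fin (4*n)) → ℤ)
    (hσ : ∀ e ∈ (Kc (4*n)).edgeSet, σ e = 1 ∨ σ e = -1)
    (hbig : ∀ M : (Kc (4*n)).Subgraph, M.IsPerfectMatching →
      2*(k : ℤ) ≤ |sumE σ M.edgeSet|)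
    (hpos : ∀ M : (Kc (4*n)).Subgraph, M.IsPerfectMatching → 0 < sumE σ M.edgeSet) :
    ∀ M : (minusGraph n σ).Subgraph, M.IsMatching →
      (M.edgeSet.ncard : ℤ) ≤ (n : ℤ) - (k : ℤ) := by
  intro M hM
  obtain ⟨P, hP, hMP⟩ :
      ∃ P : (Kc (4*n)).Subgraph, P.IsPerfectMatching ∧ M.edgeSet ⊆ P.edgeSet :=
    hM.exists_isPerfectMatching_top_edgeSet_superset ⟨2 * n, by rw [Nat.card_fin]; ring⟩
  have hσP : sumE σ P.edgeSet ≤ P.edgeSet.ncard - 2 * M.edgeSet.ncard :=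
    sumE_le_ncard_sub_two_mul hMP
      (fun e he => (hσ e (P.edgeSet_subset he)).elim le_of_eq (by omega))
      (fun e he => eq_neg_one_of_mem_edgeSet_minusGraph (M.edgeSet_subset he))
  have hcard : 4 * n = 2 * P.edgeSet.ncard := by simpa using hP.natCard_eq_two_mul_ncard_edgeSet
  have hkP : 2 * (k : ℤ) ≤ sumE σ P.edgeSet := abs_of_pos (hpos P hP) ▸ hbig P hP
  omega

theorem stmt15 (n k : ℕ) (hn : 0 < n) (hk : 2 ≤ k) (σ : Sym2 (Fin (4*n)) → ℤ)
    (hσ : ∀ e ∈ (Kc (4*n)).edgeSet, σ e = 1 ∨ σ e = -1)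
    (hsum : 0 ≤ sumE σ (Kc (4*n)).edgeSet)
    (hbig : ∀ M : (Kc (4*n)).Subgraph, M.IsPerfectMatching →
      2*(k : ℤ) ≤ |sumE σ M.edgeSet|)
    (hpos : ∀ M : (Kc (4*n)).Subgraph, M.IsPerfectMatching → 0 < sumE σ M.edgeSet) :
    ∀ M : (minusGraph n σ).Subgraph, M.IsMatching →
      (M.edgeSet.ncard : ℤ) ≤ (n : ℤ) - (k : ℤ) :=
  stmt15_general n k σ hσ hbig hpos
end
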